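/- arXiv:2105.04878 — 4 statements merged into one kernel-verified Lean document; each statement's English description precedes it below -/
import Mathlib

section
/- Let X and Y be graphs with bounded degree and f : X → Y a quasi-isometry. Then there exists a constant M ≥ 0 such that |∂ f^{-1}(A)| ≤ M · |∂A| for every finite subset A of vertices of Y. -/
/-!
An edge of `G` leaving `f⁻¹(A)` is mapped to two points on either side of `A` at distance at
most `R = ⌈C + B⌉`, so a geodesic between them meets `∂A` within distance `R` of the image of
the outer endpoint. Hence `∂ f⁻¹(A)` is covered by the preimages of the `R`-balls around the
points of `∂A`. By the lower quasi-isometry bound each such preimage has diameter at most some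
`K` in `G`, so it has at most `(D + 1) ^ K` points, `D` bounding the degrees of `G`.
-/

open SimpleGraph

/-- The boundary `∂A` of a set of vertices: the vertices not in `A` adjacent to a
vertex of `A`. -/
def bdry {V : Type*} (G : SimpleGraph V) (A : Set V) : Set V :=
  {v | v ∉ A ∧ ∃ a ∈ A, G.Adj a v}

/-- `f` is a quasi-isometry between the two graphs (with their graph metrics). -/
def IsQI {V W : Type*} (G : SimpleGraph V) (H : SimpleGraph W) (f : V → W) : Prop :=
  ∃ A B : ℝ, 0 < A ∧ 0 ≤ B ∧
    (∀ x y : V, (G.dist x y : ℝ) / A - B ≤ (H.dist (f x) (f y) : ℝ) ∧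
      (H.dist (f x) (f y) : ℝ) ≤ A * (G.dist x y : ℝ) + B) ∧
    ∀ w : W, ∃ x : V, (H.dist (f x) w : ℝ) ≤ B

/-- The graph has bounded degree. -/
def BddDeg {V : Type*} (G : SimpleGraph V) : Prop :=
  ∃ D : ℕ, ∀ v : V, (G.neighborSet v).Finite ∧ (G.neighborSet v).ncard ≤ D

lemma Set.ncard_le_mul_of_subset_biUnion {α ι : Type*} {s : Set α} {t : Set ι}
    {u : ι → Set α} {K : ℕ} (ht : t.Finite) (hu : ∀ i ∈ t, (u i).Finite)
    (hK : ∀ i ∈ t, (u i).ncard ≤ K) (hs : s ⊆ ⋃ i ∈ t, u i) :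
    s.ncard ≤ K * t.ncard := by
  calc s.ncard ≤ (⋃ i ∈ ht.toFinset, u i).ncard :=
        Set.ncard_le_ncard (by simpa using hs) (ht.biUnion hu |>.subset (by simp))
    _ ≤ ∑ i ∈ ht.toFinset, (u i).ncard := ht.toFinset.set_ncard_biUnion_le u
    _ ≤ ht.toFinset.card • K := Finset.sum_le_card_nsmul _ _ _ (by simpa using hK)
    _ = K * t.ncard := by rw [smul_eq_mul, mul_comm, Set.ncard_eq_toFinset_card _ ht]

namespace SimpleGraph

variable {V : Type*} {G : SimpleGraph V}

lemma Walk.exists_mem_bdry_dist_le {A : Set V} {u v : V} (p : G.Walk u v) (hu : u ∈ A)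
    (hv : v ∉ A) : ∃ b ∈ bdry G A, G.dist b v ≤ p.length := by
  induction p with
  | nil => exact absurd hu hv
  | @cons u w v huw q ih =>
    by_cases hw : w ∈ A
    · obtain ⟨b, hb, hbv⟩ := ih hw hv
      exact ⟨b, hb, hbv.trans (by simp)⟩
    · exact ⟨w, ⟨hw, u, hu, huw⟩, (dist_le q).trans (by simp)⟩

lemma Connected.exists_mem_bdry_dist_le_dist (hG : G.Connected) {A : Set V} {u v : V}
    (hu : u ∈ A) (hv : v ∉ A) : ∃ b ∈ bdry G A, G.dist b v ≤ G.dist u v := by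
  obtain ⟨p, hp⟩ := hG.exists_walk_length_eq_dist u v
  exact hp ▸ p.exists_mem_bdry_dist_le hu hv

lemma finite_bdry (hG : ∀ v, (G.neighborSet v).Finite) {A : Set V} (hA : A.Finite) :
    (bdry G A).Finite :=
  (hA.biUnion fun a _ ↦ hG a).subset fun _ ⟨_, _, ha, hav⟩ ↦ Set.mem_biUnion ha hav

lemma setOf_dist_le_succ_subset (x₀ : V) (r : ℕ) :
    {x | G.dist x₀ x ≤ r + 1} ⊆ ⋃ y ∈ {y | G.dist x₀ y ≤ r}, insert y (G.neighborSet y) := by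
  intro x (hx : G.dist x₀ x ≤ r + 1)
  simp only [Set.mem_iUnion, Set.mem_ofPred_eq, exists_prop]
  obtain hxr | hxr := le_or_gt (G.dist x₀ x) r
  · exact ⟨x, hxr, Set.mem_insert x _⟩
  rw [dist_comm] at hx hxr
  obtain ⟨p, hp⟩ := exists_walk_of_dist_ne_zero hxr.ne_bot
  cases p with
  | nil => simp at hxr
  | cons hxy q =>
    refine ⟨_, ?_, Set.mem_insert_of_mem _ hxy.symm⟩
    rw [dist_comm]
    exact (dist_le q).trans (by simp at hp; omega)

section BoundedDegree

variable {D : ℕ} (hD : ∀ v, (G.neighborSet v).Finite ∧ (G.neighborSet v).ncard ≤ D)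
include hD

lemma finite_setOf_dist_le (hG : G.Connected) (x₀ : V) (r : ℕ) :
    {x | G.dist x₀ x ≤ r}.Finite := by
  induction r with
  | zero => simp [hG.dist_eq_zero_iff]
  | succ r ih =>
    exact (ih.biUnion fun y _ ↦ (hD y).1.insert y).subset (setOf_dist_le_succ_subset x₀ r)

lemma ncard_setOf_dist_le_le (hG : G.Connected) (x₀ : V) (r : ℕ) :
    {x | G.dist x₀ x ≤ r}.ncard ≤ (D + 1) ^ r := by
  induction r with
  | zero => simp [hG.dist_eq_zero_iff]
  | succ r ih =>
    calc _ ≤ (D + 1) * {y | G.dist x₀ y ≤ r}.ncard :=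
          Set.ncard_le_mul_of_subset_biUnion (finite_setOf_dist_le hD hG x₀ r)
            (fun y _ ↦ (hD y).1.insert y)
            (fun y _ ↦ (Set.ncard_insert_le y _).trans (by linarith [(hD y).2]))
            (setOf_dist_le_succ_subset x₀ r)
      _ ≤ (D + 1) ^ (r + 1) := by rw [pow_succ']; gcongr

lemma finite_and_ncard_le_of_dist_le (hG : G.Connected) {s : Set V} {K : ℕ}
    (hs : ∀ x ∈ s, ∀ y ∈ s, G.dist x y ≤ K) : s.Finite ∧ s.ncard ≤ (D + 1) ^ K := by
  obtain rfl | ⟨x₀, hx₀⟩ := s.eq_empty_or_nonempty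
  · simp
  have hsub : s ⊆ {x | G.dist x₀ x ≤ K} := fun x hx ↦ hs x₀ hx₀ x hx
  have hfin := finite_setOf_dist_le hD hG x₀ K
  exact ⟨hfin.subset hsub, (Set.ncard_le_ncard hsub hfin).trans (ncard_setOf_dist_le_le hD hG x₀ K)⟩

end BoundedDegree

variable {W : Type*} {H : SimpleGraph W} {f : V → W} {C B : ℝ}

lemma dist_map_le_ceil_of_adj
    (hf : ∀ x y, (H.dist (f x) (f y) : ℝ) ≤ C * G.dist x y + B) {x y : V} (hxy : G.Adj x y) :
    H.dist (f x) (f y) ≤ ⌈C + B⌉₊ := by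
  have := hf x y
  rw [dist_eq_one_iff_adj.mpr hxy, Nat.cast_one, mul_one] at this
  exact_mod_cast this.trans (Nat.le_ceil _)

lemma dist_le_ceil_of_dist_map_le (hC : 0 < C)
    (hf : ∀ x y, (G.dist x y : ℝ) / C - B ≤ H.dist (f x) (f y)) {x y : V} {r : ℕ}
    (hr : H.dist (f x) (f y) ≤ r) : G.dist x y ≤ ⌈C * (r + B)⌉₊ := by
  have : (G.dist x y : ℝ) / C ≤ r + B := by linarith [hf x y, (Nat.cast_le (α := ℝ)).mpr hr]
  exact_mod_cast ((div_le_iff₀' hC).mp this).trans (Nat.le_ceil _)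

end SimpleGraph

/-- For a quasi-isometry `f` between graphs of bounded degree, there is a constant `M`
with `|∂ f⁻¹(A)| ≤ M * |∂A|` for every finite set `A` of vertices of the target. -/
theorem stmt4 {V W : Type*} (G : SimpleGraph V) (Hgr : SimpleGraph W)
    (hGc : G.Connected) (hHc : Hgr.Connected) (hGd : BddDeg G) (hHd : BddDeg Hgr)
    (f : V → W) (hf : IsQI G Hgr f) :
    ∃ M : ℕ, ∀ A : Finset W,
      (bdry G (f ⁻¹' (A : Set W))).ncard ≤ M * (bdry Hgr (A : Set W)).ncard := by
  obtain ⟨C, B, hC, -, hfCB, -⟩ := hf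
  obtain ⟨DG, hDG⟩ := hGd
  obtain ⟨DH, hDH⟩ := hHd
  set R := ⌈C + B⌉₊
  set K := ⌈C * ((2 * R : ℕ) + B)⌉₊
  have hfiber (b : W) : ∀ x ∈ {x | Hgr.dist b (f x) ≤ R}, ∀ y ∈ {x | Hgr.dist b (f x) ≤ R},
      G.dist x y ≤ K := fun x (hx : _ ≤ R) y (hy : _ ≤ R) ↦
    dist_le_ceil_of_dist_map_le hC (fun x y ↦ (hfCB x y).1)
      ((hHc.dist_triangle (v := b)).trans (by rw [dist_comm] at hx; omega))
  refine ⟨(DG + 1) ^ K, fun A ↦ ?_⟩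
  refine Set.ncard_le_mul_of_subset_biUnion (finite_bdry (fun w ↦ (hDH w).1) A.finite_toSet)
    (fun b _ ↦ (finite_and_ncard_le_of_dist_le hDG hGc (hfiber b)).1)
    (fun b _ ↦ (finite_and_ncard_le_of_dist_le hDG hGc (hfiber b)).2) ?_
  rintro x ⟨hx, a, ha, hax⟩
  obtain ⟨b, hb, hbx⟩ := hHc.exists_mem_bdry_dist_le_dist ha hx
  exact Set.mem_biUnion hb (hbx.trans (dist_map_le_ceil_of_adj (fun x y ↦ (hfCB x y).2) hax))
end

section
/- Let X, Y, Z be connected graphs with bounded degree, κ1, κ2 > 0 real numbers, and f, h : X → Y and g : Y → Z quasi-isometries. Then: (i) if f and h are at bounded distance and f is quasi-κ1-to-one, then h is quasi-κ1-to-one; (ii) if f is quasi-κ1-to-one and g is quasi-κ2-to-one, then g∘f is quasi-κ1κ2-to-one; (iii) if f̄ is a quasi-inverse of f and f is quasi-κ1-to-one, then f̄ is quasi-(1/κ1)-to-one. -/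
open SimpleGraph

/-- A proper map `f` into the graph `H` is quasi-`κ`-to-one: preimages of finite sets
are finite and `| κ|A| − |f⁻¹(A)| | ≤ C|∂A|` for all finite `A`. -/
def QKTO {V W : Type*} (H : SimpleGraph W) (f : V → W) (κ : ℝ) : Prop :=
  (∀ A : Finset W, (f ⁻¹' (A : Set W)).Finite) ∧
  ∃ C : ℝ, 0 < C ∧ ∀ A : Finset W,
    |κ * (A.card : ℝ) - ((f ⁻¹' (A : Set W)).ncard : ℝ)| ≤
      C * ((bdry H (A : Set W)).ncard : ℝ)

/-!
Write `N_R T` for the closed `R`-neighbourhood of `T`; in a graph of degree at most `D` it has at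
most `(D + 1) ^ R * |T|` vertices.

(i) If `f` and `h` are `R`-close, then `h⁻¹ S` is squeezed between `f⁻¹ (S \ E)` and
`f⁻¹ (S ∪ E)` for `E = N_R (∂S)`, and these two sets differ from `S`, and have their boundaries,
inside `N_(R+1) (∂S)`, whose size is `O(|∂S|)`.

(ii), (iii) If `g` sends adjacent vertices `s`-close, then `∂(g⁻¹ S) ⊆ g⁻¹ (N_s (∂S))`; when the
preimages of `g` have size linear in the set (as for a quasi-κ-to-one map or a quasi-inverse),
this gives `|∂(g⁻¹ S)| = O(|∂S|)`. The estimates for `g ∘ f` and for `f̄` are then the triangle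
inequality, the latter applied to `f̄ ∘ f`, which is quasi-one-to-one by (i).
-/

namespace SimpleGraph

variable {V : Type*} (G : SimpleGraph V)

def thicken (R : ℕ) (S : Set V) : Set V :=
  {v | ∃ a ∈ S, G.edist a v ≤ R}

def DegreeLE (D : ℕ) : Prop :=
  ∀ v, (G.neighborSet v).Finite ∧ (G.neighborSet v).ncard ≤ D

variable {G} {R : ℕ} {S T : Set V}

lemma subset_thicken : S ⊆ G.thicken R S :=
  fun v hv => ⟨v, hv, by simp⟩

lemma thicken_zero : G.thicken 0 S = S := by
  ext v
  simp [thicken, edist_eq_zero_iff]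

lemma thicken_mono {R' : ℕ} (h : R ≤ R') : G.thicken R S ⊆ G.thicken R' S :=
  fun _ ⟨a, ha, hav⟩ => ⟨a, ha, hav.trans (by exact_mod_cast h)⟩

lemma thicken_one : G.thicken 1 S = ⋃ a ∈ S, insert a (G.neighborSet a) := by
  ext v
  simp [thicken, edist_le_one_iff_adj_or_eq, or_comm, eq_comm]

lemma thicken_succ_subset : G.thicken (R + 1) S ⊆ G.thicken R (G.thicken 1 S) := by
  rintro v ⟨a, ha, hav⟩
  obtain ⟨p, hp⟩ := exists_walk_of_edist_ne_top (ne_top_of_le_ne_top (by simp) hav)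
  cases p with
  | nil => exact ⟨v, subset_thicken ha, by simp⟩
  | cons hadj q =>
    refine ⟨_, ⟨a, ha, edist_le_one_iff_adj_or_eq.mpr (Or.inl hadj)⟩, (edist_le q).trans ?_⟩
    rw [← hp, Walk.length_cons] at hav
    exact_mod_cast Nat.le_of_succ_le_succ (by exact_mod_cast hav)

lemma bdry_union_subset : bdry G (S ∪ T) ⊆ bdry G S ∪ bdry G T := by
  rintro v ⟨hv, a, ha | ha, hadj⟩
  · exact Or.inl ⟨fun h => hv (Or.inl h), a, ha, hadj⟩
  · exact Or.inr ⟨fun h => hv (Or.inr h), a, ha, hadj⟩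

lemma bdry_sdiff_subset : bdry G (S \ T) ⊆ bdry G S ∪ T := by
  rintro v ⟨hv, a, ⟨ha, -⟩, hadj⟩
  by_cases hvS : v ∈ S
  · exact Or.inr (by_contra fun hvT => hv ⟨hvS, hvT⟩)
  · exact Or.inl ⟨hvS, a, ha, hadj⟩

lemma bdry_subset_thicken_one : bdry G S ⊆ G.thicken 1 S :=
  fun _ ⟨_, a, ha, hadj⟩ => ⟨a, ha, (edist_eq_one_iff_adj.mpr hadj).le⟩

lemma bdry_thicken_subset : bdry G (G.thicken R S) ⊆ G.thicken (R + 1) S := by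
  rintro v ⟨-, a, ⟨c, hc, hca⟩, hadj⟩
  refine ⟨c, hc, (G.edist_triangle (v := a)).trans ?_⟩
  push_cast
  exact add_le_add hca (edist_eq_one_iff_adj.mpr hadj).le

lemma bdry_union_thicken_bdry_subset :
    bdry G (S ∪ G.thicken R (bdry G S)) ⊆ G.thicken (R + 1) (bdry G S) :=
  bdry_union_subset.trans (Set.union_subset subset_thicken bdry_thicken_subset)

lemma bdry_sdiff_thicken_bdry_subset :
    bdry G (S \ G.thicken R (bdry G S)) ⊆ G.thicken (R + 1) (bdry G S) :=
  bdry_sdiff_subset.trans (Set.union_subset subset_thicken (thicken_mono R.le_succ))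

/-- A geodesic from `a` to `b` leaves `S` through a vertex of `bdry G S`. -/
lemma mem_thicken_bdry_of_edist_le {a b : V} (ha : a ∈ S) (hb : b ∉ S)
    (hab : G.edist a b ≤ R) :
    a ∈ G.thicken R (bdry G S) ∧ b ∈ G.thicken R (bdry G S) := by
  classical
  obtain ⟨p, hp⟩ := exists_walk_of_edist_ne_top (ne_top_of_le_ne_top (by simp) hab)
  obtain ⟨d, hd, hd₁, hd₂⟩ := p.exists_boundary_dart S ha hb
  have hsupp := p.dart_snd_mem_support_of_mem_darts hd
  have hbdry : d.snd ∈ bdry G S := ⟨hd₂, d.fst, hd₁, d.adj⟩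
  have hlen : (p.length : ℕ∞) ≤ R := hp ▸ hab
  refine ⟨⟨d.snd, hbdry, ?_⟩, ⟨d.snd, hbdry, ?_⟩⟩
  · rw [edist_comm]
    exact (edist_le _).trans <|
      le_trans (by exact_mod_cast p.length_takeUntil_le_length hsupp) hlen
  · exact (edist_le _).trans <|
      le_trans (by exact_mod_cast p.length_dropUntil_le_length hsupp) hlen

namespace DegreeLE

variable {D : ℕ} (hD : G.DegreeLE D)
include hD

lemma finite_thicken_one (hS : S.Finite) : (G.thicken 1 S).Finite := by
  rw [thicken_one]
  exact hS.biUnion fun a _ => (hD a).1.insert a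

lemma ncard_thicken_one_le (hS : S.Finite) : (G.thicken 1 S).ncard ≤ (D + 1) * S.ncard := by
  rw [thicken_one, ← hS.coe_toFinset, Set.ncard_coe_finset]
  calc (⋃ a ∈ hS.toFinset, insert a (G.neighborSet a)).ncard
      ≤ ∑ a ∈ hS.toFinset, (insert a (G.neighborSet a)).ncard := Finset.set_ncard_biUnion_le _ _
    _ ≤ hS.toFinset.card • (D + 1) := Finset.sum_le_card_nsmul _ _ _ fun a _ =>
        (Set.ncard_insert_le _ _).trans (Nat.succ_le_succ (hD a).2)
    _ = (D + 1) * hS.toFinset.card := by rw [smul_eq_mul, mul_comm]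

lemma finite_thicken (R : ℕ) (hS : S.Finite) : (G.thicken R S).Finite := by
  induction R generalizing S with
  | zero => rwa [thicken_zero]
  | succ R ih => exact (ih (hD.finite_thicken_one hS)).subset thicken_succ_subset

lemma ncard_thicken_le (R : ℕ) (hS : S.Finite) :
    (G.thicken R S).ncard ≤ (D + 1) ^ R * S.ncard := by
  induction R generalizing S with
  | zero => simp [thicken_zero]
  | succ R ih =>
    calc (G.thicken (R + 1) S).ncard ≤ (G.thicken R (G.thicken 1 S)).ncard :=
          Set.ncard_le_ncard thicken_succ_subset
            (hD.finite_thicken R (hD.finite_thicken_one hS))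
      _ ≤ (D + 1) ^ R * ((D + 1) * S.ncard) :=
          (ih (hD.finite_thicken_one hS)).trans
            (Nat.mul_le_mul_left _ (hD.ncard_thicken_one_le hS))
      _ = (D + 1) ^ (R + 1) * S.ncard := by ring

lemma finite_bdry (hS : S.Finite) : (bdry G S).Finite :=
  (hD.finite_thicken_one hS).subset bdry_subset_thicken_one

lemma ncard_bdry_le (hS : S.Finite) : (bdry G S).ncard ≤ (D + 1) * S.ncard :=
  (Set.ncard_le_ncard bdry_subset_thicken_one (hD.finite_thicken_one hS)).trans
    (hD.ncard_thicken_one_le hS)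

end DegreeLE

end SimpleGraph

section Ncard

variable {α : Type*} {S E : Set α}

lemma abs_ncard_sub_ncard_union_le (hS : S.Finite) (hE : E.Finite) :
    |(S.ncard : ℝ) - (S ∪ E).ncard| ≤ E.ncard := by
  have h₁ : (S.ncard : ℝ) ≤ (S ∪ E).ncard := by
    exact_mod_cast Set.ncard_le_ncard Set.subset_union_left (hS.union hE)
  have h₂ : ((S ∪ E).ncard : ℝ) ≤ S.ncard + E.ncard := by
    exact_mod_cast Set.ncard_union_le S E
  rw [abs_le]; constructor <;> linarith [(Nat.cast_nonneg E.ncard : (0 : ℝ) ≤ _)]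

lemma abs_ncard_sub_ncard_sdiff_le (hS : S.Finite) (hE : E.Finite) :
    |(S.ncard : ℝ) - (S \ E).ncard| ≤ E.ncard := by
  have h₁ : ((S \ E).ncard : ℝ) ≤ S.ncard := by
    exact_mod_cast Set.ncard_le_ncard Set.sdiff_subset hS
  have h₂ : (S.ncard : ℝ) ≤ (S \ E).ncard + E.ncard := by
    exact_mod_cast Set.ncard_le_ncard_sdiff_add_ncard S E hE
  rw [abs_le]; constructor <;> linarith [(Nat.cast_nonneg E.ncard : (0 : ℝ) ≤ _)]

end Ncard

section Preimage

variable {U V W : Type*} {G : SimpleGraph V} {H : SimpleGraph W} {R : ℕ}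

lemma bdry_preimage_subset {g : V → W} {s : ℕ} {S : Set W}
    (hg : ∀ y y', G.Adj y y' → H.edist (g y) (g y') ≤ s) :
    bdry G (g ⁻¹' S) ⊆ g ⁻¹' H.thicken s (bdry H S) :=
  fun _ ⟨hy, _, hy', hadj⟩ => (mem_thicken_bdry_of_edist_le (S := S) hy' hy (hg _ _ hadj)).2

lemma preimage_subset_preimage_union_thicken {f h : U → W} {S : Set W}
    (hfh : ∀ x, H.edist (f x) (h x) ≤ R) :
    h ⁻¹' S ⊆ f ⁻¹' (S ∪ H.thicken R (bdry H S)) := by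
  intro x hx
  by_cases hfx : f x ∈ S
  · exact Or.inl hfx
  · exact Or.inr (mem_thicken_bdry_of_edist_le (S := S) hx hfx (edist_comm.trans_le (hfh x))).2

lemma preimage_sdiff_thicken_subset_preimage {f h : U → W} {S : Set W}
    (hfh : ∀ x, H.edist (f x) (h x) ≤ R) :
    f ⁻¹' (S \ H.thicken R (bdry H S)) ⊆ h ⁻¹' S :=
  fun x ⟨hfx, hE⟩ => by_contra fun hhx =>
    hE (mem_thicken_bdry_of_edist_le (S := S) hfx hhx (hfh x)).1

lemma preimage_subset_thicken_image {f : V → W} {fb : W → V} {T : Set V}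
    (hR : ∀ y, H.edist (f (fb y)) y ≤ R) : fb ⁻¹' T ⊆ H.thicken R (f '' T) :=
  fun y hy => ⟨f (fb y), Set.mem_image_of_mem f hy, hR y⟩

end Preimage

section DegreeBound

variable {V W : Type*} {G : SimpleGraph V} {H : SimpleGraph W} {D : ℕ}

lemma ncard_bdry_preimage_le (hD : H.DegreeLE D) {g : V → W} {s : ℕ}
    (hg : ∀ y y', G.Adj y y' → H.edist (g y) (g y') ≤ s)
    (hfin : ∀ T : Set W, T.Finite → (g ⁻¹' T).Finite) {M : ℝ} (hM₀ : 0 ≤ M)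
    (hM : ∀ T : Set W, T.Finite → ((g ⁻¹' T).ncard : ℝ) ≤ M * T.ncard)
    {S : Set W} (hS : S.Finite) :
    ((bdry G (g ⁻¹' S)).ncard : ℝ) ≤ M * (D + 1) ^ s * (bdry H S).ncard := by
  have hT := hD.finite_thicken s (hD.finite_bdry hS)
  calc ((bdry G (g ⁻¹' S)).ncard : ℝ) ≤ (g ⁻¹' H.thicken s (bdry H S)).ncard := by
        exact_mod_cast Set.ncard_le_ncard (bdry_preimage_subset hg) (hfin _ hT)
    _ ≤ M * (H.thicken s (bdry H S)).ncard := hM _ hT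
    _ ≤ M * ((D + 1) ^ s * (bdry H S).ncard) := by
        gcongr; exact_mod_cast hD.ncard_thicken_le s (hD.finite_bdry hS)
    _ = M * (D + 1) ^ s * (bdry H S).ncard := by ring

variable {f : V → W} {fb : W → V} {R : ℕ} {T : Set V}

lemma finite_preimage_of_edist_le (hD : H.DegreeLE D) (hR : ∀ y, H.edist (f (fb y)) y ≤ R)
    (hT : T.Finite) : (fb ⁻¹' T).Finite :=
  (hD.finite_thicken R (hT.image f)).subset (preimage_subset_thicken_image hR)

lemma ncard_preimage_le_of_edist_le (hD : H.DegreeLE D) (hR : ∀ y, H.edist (f (fb y)) y ≤ R)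
    (hT : T.Finite) : ((fb ⁻¹' T).ncard : ℝ) ≤ (D + 1) ^ R * T.ncard := by
  have := (Set.ncard_le_ncard (preimage_subset_thicken_image hR)
    (hD.finite_thicken R (hT.image f))).trans (hD.ncard_thicken_le R (hT.image f))
  exact_mod_cast this.trans (Nat.mul_le_mul_left _ (Set.ncard_image_le hT))

end DegreeBound

section Connected

variable {V W : Type*} {G : SimpleGraph V} {H : SimpleGraph W}

lemma SimpleGraph.Connected.edist_le_ceil (hc : G.Connected) {u v : V} {C : ℝ}
    (h : (G.dist u v : ℝ) ≤ C) : G.edist u v ≤ ⌈C⌉₊ := by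
  rw [← (hc.preconnected u v).coe_dist_eq_edist, Nat.cast_le]
  exact_mod_cast h.trans (Nat.le_ceil C)

lemma IsQI.exists_edist_le_of_adj {f : V → W} (hf : IsQI G H f) (hc : H.Connected) :
    ∃ s : ℕ, ∀ x y, G.Adj x y → H.edist (f x) (f y) ≤ s := by
  obtain ⟨A, B, -, -, hAB, -⟩ := hf
  refine ⟨⌈A + B⌉₊, fun x y hxy => hc.edist_le_ceil ?_⟩
  simpa [dist_eq_one_iff_adj.mpr hxy] using (hAB x y).2

end Connected

namespace QKTO

variable {V W : Type*} {G : SimpleGraph V} {H : SimpleGraph W} {f : V → W} {κ : ℝ}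

lemma finite_preimage (hf : QKTO H f κ) {S : Set W} (hS : S.Finite) : (f ⁻¹' S).Finite := by
  obtain ⟨A, rfl⟩ := hS.exists_finset_coe
  exact hf.1 A

lemma exists_bound (hf : QKTO H f κ) : ∃ C : ℝ, 0 ≤ C ∧ ∀ S : Set W, S.Finite →
    |κ * S.ncard - (f ⁻¹' S).ncard| ≤ C * (bdry H S).ncard := by
  obtain ⟨-, C, hC₀, hC⟩ := hf
  refine ⟨C, hC₀.le, fun S hS => ?_⟩
  obtain ⟨A, rfl⟩ := hS.exists_finset_coe
  simpa only [Set.ncard_coe_finset] using hC A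

lemma of_bound (hfin : ∀ S : Set W, S.Finite → (f ⁻¹' S).Finite) (C : ℝ)
    (hC : ∀ S : Set W, S.Finite → |κ * S.ncard - (f ⁻¹' S).ncard| ≤ C * (bdry H S).ncard) :
    QKTO H f κ := by
  refine ⟨fun A => hfin _ A.finite_toSet, |C| + 1, by positivity, fun A => ?_⟩
  calc |κ * A.card - (f ⁻¹' A).ncard| ≤ C * (bdry H A).ncard := by
        simpa only [Set.ncard_coe_finset] using hC _ A.finite_toSet
    _ ≤ (|C| + 1) * (bdry H A).ncard := by gcongr; linarith [le_abs_self C]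

lemma id_one : QKTO G id 1 :=
  of_bound (fun _ hS => hS) 0 fun _ _ => by simp

lemma exists_ncard_preimage_le {D : ℕ} (hD : H.DegreeLE D) (hf : QKTO H f κ) :
    ∃ M : ℝ, 0 ≤ M ∧ ∀ T : Set W, T.Finite → ((f ⁻¹' T).ncard : ℝ) ≤ M * T.ncard := by
  obtain ⟨C, hC₀, hC⟩ := hf.exists_bound
  refine ⟨|κ| + C * (D + 1), by positivity, fun T hT => ?_⟩
  have hbdry : ((bdry H T).ncard : ℝ) ≤ (D + 1) * T.ncard := by
    exact_mod_cast hD.ncard_bdry_le hT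
  calc ((f ⁻¹' T).ncard : ℝ) ≤ κ * T.ncard + C * (bdry H T).ncard := by
        linarith [(abs_le.mp (hC T hT)).1]
    _ ≤ |κ| * T.ncard + C * ((D + 1) * T.ncard) := by gcongr; exact le_abs_self κ
    _ = (|κ| + C * (D + 1)) * T.ncard := by ring

variable {U : Type*}

lemma abs_sub_ncard_preimage_le {f : U → W} {C : ℝ}
    (hC : ∀ S : Set W, S.Finite → |κ * S.ncard - (f ⁻¹' S).ncard| ≤ C * (bdry H S).ncard)
    (S : Set W) {S' : Set W} (hS' : S'.Finite) :
    |κ * S.ncard - (f ⁻¹' S').ncard| ≤ |κ| * |(S.ncard : ℝ) - S'.ncard| + C * (bdry H S').ncard :=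
  calc |κ * S.ncard - (f ⁻¹' S').ncard|
      = |κ * ((S.ncard : ℝ) - S'.ncard) + (κ * S'.ncard - (f ⁻¹' S').ncard)| := by ring_nf
    _ ≤ _ := (abs_add_le _ _).trans (by rw [abs_mul]; exact add_le_add_right (hC S' hS') _)

theorem of_edist_le {D R : ℕ} {f h : U → W} (hD : H.DegreeLE D) (hf : QKTO H f κ)
    (hfh : ∀ x, H.edist (f x) (h x) ≤ R) : QKTO H h κ := by
  obtain ⟨C, hC₀, hC⟩ := hf.exists_bound
  refine of_bound (fun S hS => (hf.finite_preimage (hS.union (hD.finite_thicken R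
    (hD.finite_bdry hS)))).subset (preimage_subset_preimage_union_thicken hfh))
    ((|κ| + C) * (D + 1) ^ (R + 1)) fun S hS => ?_
  set E := H.thicken R (bdry H S)
  set E' := H.thicken (R + 1) (bdry H S)
  have hE'fin : E'.Finite := hD.finite_thicken _ (hD.finite_bdry hS)
  have hEE' : E ⊆ E' := thicken_mono R.le_succ
  have hEfin : E.Finite := hE'fin.subset hEE'
  have hE : (E.ncard : ℝ) ≤ E'.ncard := by exact_mod_cast Set.ncard_le_ncard hEE' hE'fin
  have hbout : ((bdry H (S ∪ E)).ncard : ℝ) ≤ E'.ncard := by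
    exact_mod_cast Set.ncard_le_ncard bdry_union_thicken_bdry_subset hE'fin
  have hbin : ((bdry H (S \ E)).ncard : ℝ) ≤ E'.ncard := by
    exact_mod_cast Set.ncard_le_ncard bdry_sdiff_thicken_bdry_subset hE'fin
  have hupper : ((h ⁻¹' S).ncard : ℝ) ≤ (f ⁻¹' (S ∪ E)).ncard := by
    exact_mod_cast Set.ncard_le_ncard (preimage_subset_preimage_union_thicken hfh)
      (hf.finite_preimage (hS.union hEfin))
  have hlower : ((f ⁻¹' (S \ E)).ncard : ℝ) ≤ (h ⁻¹' S).ncard := by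
    exact_mod_cast Set.ncard_le_ncard (preimage_sdiff_thicken_subset_preimage hfh)
      ((hf.finite_preimage (hS.union hEfin)).subset (preimage_subset_preimage_union_thicken hfh))
  have hout := abs_le.mp (abs_sub_ncard_preimage_le hC S (hS.union hEfin))
  have hin := abs_le.mp (abs_sub_ncard_preimage_le hC S (hS.sdiff (t := E)))
  have hκout := mul_le_mul_of_nonneg_left ((abs_ncard_sub_ncard_union_le hS hEfin).trans hE)
    (abs_nonneg κ)
  have hκin := mul_le_mul_of_nonneg_left ((abs_ncard_sub_ncard_sdiff_le hS hEfin).trans hE)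
    (abs_nonneg κ)
  have hCout := mul_le_mul_of_nonneg_left hbout hC₀
  have hCin := mul_le_mul_of_nonneg_left hbin hC₀
  calc |κ * S.ncard - (h ⁻¹' S).ncard| ≤ (|κ| + C) * E'.ncard := by
        rw [abs_le]; constructor <;> linarith
    _ ≤ (|κ| + C) * ((D + 1) ^ (R + 1) * (bdry H S).ncard) := by
        gcongr; exact_mod_cast hD.ncard_thicken_le _ (hD.finite_bdry hS)
    _ = (|κ| + C) * (D + 1) ^ (R + 1) * (bdry H S).ncard := by ring

theorem comp {f : U → V} {g : V → W} {κ₁ κ₂ K : ℝ} (hf : QKTO G f κ₁) (hg : QKTO H g κ₂)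
    (hK : ∀ S : Set W, S.Finite → ((bdry G (g ⁻¹' S)).ncard : ℝ) ≤ K * (bdry H S).ncard) :
    QKTO H (g ∘ f) (κ₁ * κ₂) := by
  obtain ⟨C₁, hC₁₀, hC₁⟩ := hf.exists_bound
  obtain ⟨C₂, -, hC₂⟩ := hg.exists_bound
  refine of_bound (fun S hS => hf.finite_preimage (hg.finite_preimage hS))
    (|κ₁| * C₂ + C₁ * K) fun S hS => ?_
  rw [Set.preimage_comp]
  calc |κ₁ * κ₂ * S.ncard - (f ⁻¹' (g ⁻¹' S)).ncard|
      = |κ₁ * (κ₂ * S.ncard - (g ⁻¹' S).ncard)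
          + (κ₁ * (g ⁻¹' S).ncard - (f ⁻¹' (g ⁻¹' S)).ncard)| := by ring_nf
    _ ≤ |κ₁| * (C₂ * (bdry H S).ncard) + C₁ * (K * (bdry H S).ncard) := by
      refine (abs_add_le _ _).trans (add_le_add ?_ ?_)
      · rw [abs_mul]
        exact mul_le_mul_of_nonneg_left (hC₂ S hS) (abs_nonneg κ₁)
      · exact (hC₁ _ (hg.finite_preimage hS)).trans
          (mul_le_mul_of_nonneg_left (hK S hS) hC₁₀)
    _ = (|κ₁| * C₂ + C₁ * K) * (bdry H S).ncard := by ring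

theorem of_comp {f : V → W} {fb : W → V} {κ K : ℝ} (hκ : κ ≠ 0) (hf : QKTO H f κ)
    (hfbf : QKTO G (fb ∘ f) 1) (hfin : ∀ S : Set V, S.Finite → (fb ⁻¹' S).Finite)
    (hK : ∀ S : Set V, S.Finite → ((bdry H (fb ⁻¹' S)).ncard : ℝ) ≤ K * (bdry G S).ncard) :
    QKTO G fb κ⁻¹ := by
  obtain ⟨C₁, hC₁₀, hC₁⟩ := hf.exists_bound
  obtain ⟨C, -, hC⟩ := hfbf.exists_bound
  refine of_bound hfin (|κ|⁻¹ * (C + C₁ * K)) fun S hS => ?_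
  have hfbf := hC S hS
  rw [Set.preimage_comp, one_mul] at hfbf
  calc |κ⁻¹ * S.ncard - (fb ⁻¹' S).ncard|
      = |κ|⁻¹ * |(S.ncard - (f ⁻¹' (fb ⁻¹' S)).ncard)
          - (κ * (fb ⁻¹' S).ncard - (f ⁻¹' (fb ⁻¹' S)).ncard)| := by
        rw [← abs_inv, ← abs_mul]
        congr 1
        field_simp
        ring
    _ ≤ |κ|⁻¹ * (C * (bdry G S).ncard + C₁ * (K * (bdry G S).ncard)) := by
      gcongr
      refine (abs_sub _ _).trans (add_le_add hfbf ?_)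
      exact (hC₁ _ (hfin S hS)).trans (mul_le_mul_of_nonneg_left (hK S hS) hC₁₀)
    _ = |κ|⁻¹ * (C + C₁ * K) * (bdry G S).ncard := by ring

end QKTO

theorem stmt5_general {VX VY VZ : Type*}
    (GX : SimpleGraph VX) (GY : SimpleGraph VY) (GZ : SimpleGraph VZ)
    (hXc : GX.Connected) (hYc : GY.Connected) (hZc : GZ.Connected)
    (hXd : BddDeg GX) (hYd : BddDeg GY) (hZd : BddDeg GZ)
    (κ1 κ2 : ℝ) (hκ1 : 0 < κ1)
    (f h : VX → VY) (g : VY → VZ)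
    (hg : IsQI GY GZ g) :
    ((∃ C : ℝ, ∀ x : VX, (GY.dist (f x) (h x) : ℝ) ≤ C) →
        QKTO GY f κ1 → QKTO GY h κ1) ∧
    (QKTO GY f κ1 → QKTO GZ g κ2 → QKTO GZ (g ∘ f) (κ1 * κ2)) ∧
    (∀ fb : VY → VX, IsQI GY GX fb →
      (∃ C : ℝ, ∀ x : VX, (GX.dist (fb (f x)) x : ℝ) ≤ C) →
      (∃ C : ℝ, ∀ y : VY, (GY.dist (f (fb y)) y : ℝ) ≤ C) →
      QKTO GY f κ1 → QKTO GX fb (1 / κ1)) := by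
  obtain ⟨DX, hDX⟩ := hXd
  obtain ⟨DY, hDY⟩ := hYd
  obtain ⟨DZ, hDZ⟩ := hZd
  refine ⟨fun ⟨C, hC⟩ hfq => hfq.of_edist_le hDY fun x => hYc.edist_le_ceil (hC x),
    fun hfq hgq => ?_, fun fb hfb ⟨Cx, hCx⟩ ⟨Cy, hCy⟩ hfq => ?_⟩
  · obtain ⟨s, hs⟩ := hg.exists_edist_le_of_adj hZc
    obtain ⟨M, hM₀, hM⟩ := hgq.exists_ncard_preimage_le hDZ
    exact hfq.comp hgq fun S hS =>
      ncard_bdry_preimage_le hDZ hs (fun _ => hgq.finite_preimage) hM₀ hM hS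
  · obtain ⟨s, hs⟩ := hfb.exists_edist_le_of_adj hXc
    have hR : ∀ y, GY.edist (f (fb y)) y ≤ ⌈Cy⌉₊ := fun y => hYc.edist_le_ceil (hCy y)
    have hfbf : QKTO GX (fb ∘ f) 1 := QKTO.id_one.of_edist_le hDX fun x =>
      edist_comm.trans_le (hXc.edist_le_ceil (hCx x))
    rw [one_div]
    exact hfq.of_comp hκ1.ne' hfbf (fun _ => finite_preimage_of_edist_le hDY hR) fun S hS =>
      ncard_bdry_preimage_le hDX hs (fun _ => finite_preimage_of_edist_le hDY hR)
        (by positivity) (fun _ => ncard_preimage_le_of_edist_le hDY hR) hS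

/-- Behaviour of quasi-`κ`-to-one quasi-isometries between connected bounded-degree
graphs: (i) stability under bounded distance; (ii) composition multiplies the scaling
factors; (iii) a quasi-inverse of a quasi-`κ₁`-to-one quasi-isometry is
quasi-`(1/κ₁)`-to-one. -/
theorem stmt5 {VX VY VZ : Type*}
    (GX : SimpleGraph VX) (GY : SimpleGraph VY) (GZ : SimpleGraph VZ)
    (hXc : GX.Connected) (hYc : GY.Connected) (hZc : GZ.Connected)
    (hXd : BddDeg GX) (hYd : BddDeg GY) (hZd : BddDeg GZ)
    (κ1 κ2 : ℝ) (hκ1 : 0 < κ1) (hκ2 : 0 < κ2)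
    (f h : VX → VY) (g : VY → VZ)
    (hf : IsQI GX GY f) (hh : IsQI GX GY h) (hg : IsQI GY GZ g) :
    ((∃ C : ℝ, ∀ x : VX, (GY.dist (f x) (h x) : ℝ) ≤ C) →
        QKTO GY f κ1 → QKTO GY h κ1) ∧
    (QKTO GY f κ1 → QKTO GZ g κ2 → QKTO GZ (g ∘ f) (κ1 * κ2)) ∧
    (∀ fb : VY → VX, IsQI GY GX fb →
      (∃ C : ℝ, ∀ x : VX, (GX.dist (fb (f x)) x : ℝ) ≤ C) →
      (∃ C : ℝ, ∀ y : VY, (GY.dist (f (fb y)) y : ℝ) ≤ C) →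
      QKTO GY f κ1 → QKTO GX fb (1 / κ1)) :=
  stmt5_general GX GY GZ hXc hYc hZc hXd hYd hZd κ1 κ2 hκ1 f h g hg
end

section
/- Let F and H be groups with F nontrivial. Then H is an almost malnormal subgroup of the wreath product F ≀ H = (⊕_H F) ⋊ H: for every g ∈ F ≀ H not in H, the intersection gHg^{-1} ∩ H is finite. In particular, if H is infinite, H coincides with its commensurator in F ≀ H. -/
/-! If `g = (f, a) ∉ H` conjugates `h ∈ H` into `H`, then `k = a h a⁻¹` fixes `f ≠ 1` under the
shift action. For a fixed point `s` of the finite support of `f`, `k⁻¹ s` then lies in that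
support as well, so `k` ranges over the finite set `s * (supp f)⁻¹`. An infinite almost malnormal subgroup is its own
commensurator, since a finite-index subgroup of an infinite group is infinite. -/

/-- The direct sum `⊕_H F`, realised as the subgroup of `H → F` of finitely
supported functions. -/
def lampN (F H : Type*) [Group F] [Group H] : Subgroup (H → F) where
  carrier := {f | {h | f h ≠ 1}.Finite}
  one_mem' := Set.Finite.subset Set.finite_empty (by intro h hh; exact (hh rfl).elim)
  mul_mem' := by
    intro a b ha hb
    refine Set.Finite.subset (Set.Finite.union ha hb) ?_
    intro h hh
    by_contra hc
    simp only [Set.mem_union, Set.mem_setOf_eq, not_or, not_not] at hc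
    exact hh (by simp [hc.1, hc.2])
  inv_mem' := by
    intro a ha
    refine Set.Finite.subset ha ?_
    intro h hh
    simp only [Set.mem_setOf_eq, Pi.inv_apply, ne_eq, inv_eq_one] at hh
    exact hh

/-- The shift of a finitely supported function by `a : H`. -/
def shiftAux {F H : Type*} [Group F] [Group H] (a : H) (f : ↥(lampN F H)) :
    ↥(lampN F H) :=
  ⟨fun h => (f : H → F) (a⁻¹ * h), by
    have hf : {h : H | (f : H → F) h ≠ 1}.Finite := f.2
    show {h : H | (f : H → F) (a⁻¹ * h) ≠ 1}.Finite
    have : {h : H | (f : H → F) (a⁻¹ * h) ≠ 1} =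
        (fun h : H => a⁻¹ * h) ⁻¹' {h : H | (f : H → F) h ≠ 1} := rfl
    rw [this]
    exact Set.Finite.preimage ((mul_right_injective a⁻¹).injOn) hf⟩

/-- The shift automorphism of `⊕_H F` given by `a : H`. -/
def lampShift {F H : Type*} [Group F] [Group H] (a : H) :
    ↥(lampN F H) ≃* ↥(lampN F H) where
  toFun := shiftAux a
  invFun := shiftAux a⁻¹
  left_inv := by
    intro f; apply Subtype.ext; funext h
    show (f : H → F) (a⁻¹ * ((a⁻¹)⁻¹ * h)) = (f : H → F) h
    rw [inv_inv, inv_mul_cancel_left]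
  right_inv := by
    intro f; apply Subtype.ext; funext h
    show (f : H → F) ((a⁻¹)⁻¹ * (a⁻¹ * h)) = (f : H → F) h
    rw [inv_inv, mul_inv_cancel_left]
  map_mul' := by
    intro f g; apply Subtype.ext; funext h; rfl

/-- The action of `H` on `⊕_H F` by permuting the coordinates. -/
def lampAct (F H : Type*) [Group F] [Group H] : H →* MulAut ↥(lampN F H) where
  toFun a := lampShift (F := F) a
  map_one' := MulEquiv.ext fun f => Subtype.ext (funext fun h => by
    show (f : H → F) ((1 : H)⁻¹ * h) = (f : H → F) h
    rw [inv_one, one_mul])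
  map_mul' a b := MulEquiv.ext fun f => Subtype.ext (funext fun h => by
    show (f : H → F) ((a * b)⁻¹ * h) = (f : H → F) (b⁻¹ * (a⁻¹ * h))
    rw [mul_inv_rev, mul_assoc])

/-- The (restricted) wreath product `F ≀ H = (⊕_H F) ⋊ H`. -/
abbrev Wr (F H : Type*) [Group F] [Group H] :=
  SemidirectProduct ↥(lampN F H) H (lampAct F H)

/-- The canonical copy of `H` inside the wreath product `F ≀ H`. -/
def Hsub (F H : Type*) [Group F] [Group H] : Subgroup (Wr F H) :=
  (SemidirectProduct.inr : H →* Wr F H).range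

open Pointwise

namespace Subgroup

variable {G : Type*} [Group G]

def IsAlmostMalnormal (K : Subgroup G) : Prop :=
  ∀ g ∉ K, ((fun x => g * x * g⁻¹) '' (K : Set G) ∩ K).Finite

theorem le_commensurator (K : Subgroup G) : K ≤ Commensurable.commensurator K := fun _ hg => by
  rw [Commensurable.commensurator_mem_iff, conjAct_pointwise_smul_eq_self (le_normalizer hg)]

theorem IsAlmostMalnormal.finite_conj_subgroupOf {K : Subgroup G} (hK : K.IsAlmostMalnormal)
    {g : G} (hg : g ∉ K) : Finite ((ConjAct.toConjAct g • K).subgroupOf K) := by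
  rw [← SetLike.coe_sort_coe, coe_subgroupOf, Set.finite_coe_iff]
  refine (hK g hg).preimage Subtype.val_injective.injOn |>.subset fun x hx => ⟨?_, x.2⟩
  obtain ⟨y, hy, hyx⟩ := (mem_smul_pointwise_iff_exists _ _ _).1 hx
  exact ⟨y, hy, (ConjAct.toConjAct_smul g y).symm.trans hyx⟩

theorem IsAlmostMalnormal.commensurator_eq {K : Subgroup G} [Infinite K]
    (hK : K.IsAlmostMalnormal) : Commensurable.commensurator K = K := by
  refine le_antisymm (fun g hcomm => ?_) K.le_commensurator
  by_contra hg
  have hindex : ((ConjAct.toConjAct g • K).subgroupOf K).FiniteIndex := ⟨hcomm.1⟩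
  exact ((finite_iff_finite_and_finiteIndex _).2 ⟨hK.finite_conj_subgroupOf hg, hindex⟩).false

end Subgroup

theorem finite_setOf_forall_apply_inv_mul_eq {G M : Type*} [Group G] [One M] {f : G → M}
    (hf : (Function.mulSupport f).Finite) (hne : f ≠ 1) :
    {k : G | ∀ x, f (k⁻¹ * x) = f x}.Finite := by
  obtain ⟨s, hs⟩ := Function.ne_iff.1 hne
  refine (hf.image fun t => s * t⁻¹).subset fun k hk => ⟨k⁻¹ * s, ?_, by group⟩
  rw [Function.mem_mulSupport, hk s]
  exact hs

section Wreath

variable {F H : Type*} [Group F] [Group H]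

open SemidirectProduct

theorem mem_Hsub_iff {x : Wr F H} : x ∈ Hsub F H ↔ x.left = 1 :=
  ⟨by rintro ⟨h, rfl⟩; rfl, fun hx => ⟨x.right, by ext <;> simp [hx]⟩⟩

instance [Infinite H] : Infinite (Hsub F H) :=
  Infinite.of_injective _ (MonoidHom.ofInjective (inr_injective (φ := lampAct F H))).injective

theorem conj_inr_mem_Hsub_iff (g : Wr F H) (h : H) :
    g * inr h * g⁻¹ ∈ Hsub F H ↔ lampAct F H (g.right * h * g.right⁻¹) g.left = g.left := by
  have hleft : (g * inr h * g⁻¹).left =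
      g.left * (lampAct F H (g.right * h * g.right⁻¹) g.left)⁻¹ := by
    simp [mul_left, inv_left, mul_assoc]
  rw [mem_Hsub_iff, hleft, mul_inv_eq_one, eq_comm]

theorem isAlmostMalnormal_Hsub [Nontrivial F] : (Hsub F H).IsAlmostMalnormal := by
  intro g hg
  have hne : (g.left : H → F) ≠ 1 := fun h1 => hg (mem_Hsub_iff.2 (Subtype.ext h1))
  refine ((finite_setOf_forall_apply_inv_mul_eq g.left.2 hne).image inr).subset ?_
  rintro _ ⟨⟨_, ⟨h, rfl⟩, rfl⟩, hmem⟩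
  refine ⟨g.right * h * g.right⁻¹, fun x => ?_, ?_⟩
  · exact congrFun (congrArg Subtype.val ((conj_inr_mem_Hsub_iff g h).1 hmem)) x
  · refine SemidirectProduct.ext (mem_Hsub_iff.1 hmem).symm ?_
    simp [mul_right, inv_right]

end Wreath

/-- `H` is an almost malnormal subgroup of the wreath product `F ≀ H`: for every
`g ∉ H`, the intersection `gHg⁻¹ ∩ H` is finite. In particular, if `H` is infinite
then `H` coincides with its commensurator in `F ≀ H`. -/
theorem stmt7 (F H : Type*) [Group F] [Group H] [Nontrivial F] :
    (∀ g : Wr F H, g ∉ Hsub F H →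
      (((fun x => g * x * g⁻¹) '' (Hsub F H : Set (Wr F H))) ∩
        (Hsub F H : Set (Wr F H))).Finite) ∧
    (Infinite H → Subgroup.Commensurable.commensurator (Hsub F H) = Hsub F H) :=
  ⟨isAlmostMalnormal_Hsub, fun _ => isAlmostMalnormal_Hsub.commensurator_eq⟩
end

section
/- Let X be a quasi-median graph and C1, C2 two cliques (maximal complete subgraphs). If C1 ∩ C2 ≠ ∅ and the hyperplanes containing C1 and C2 are distinct and transverse, then C1 and C2 span a prism, i.e. the subgraph generated by C1 and C2 is isomorphic to the Cartesian product C1 × C2 as an induced subgraph of X. -/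
open SimpleGraph

/-- The triangle condition of quasi-median graphs. -/
def QMTriangle {V : Type*} (G : SimpleGraph V) : Prop :=
  ∀ a x y : V, G.Adj x y → G.dist a x = G.dist a y →
    ∃ z : V, G.Adj x z ∧ G.Adj y z ∧ G.dist a z + 1 = G.dist a x

/-- The quadrangle condition of quasi-median graphs. -/
def QMQuad {V : Type*} (G : SimpleGraph V) : Prop :=
  ∀ a x y z : V, G.Adj x z → G.Adj y z → x ≠ y → G.dist a x = G.dist a y →
    G.dist a z = G.dist a x + 1 →
    ∃ w : V, G.Adj x w ∧ G.Adj y w ∧ G.dist a w + 2 = G.dist a z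

/-- `G` has no induced `K₄⁻` (complete graph on four vertices minus an edge). -/
def NoK4minus {V : Type*} (G : SimpleGraph V) : Prop :=
  ¬ ∃ a b c d : V, a ≠ b ∧ a ≠ c ∧ a ≠ d ∧ b ≠ c ∧ b ≠ d ∧ c ≠ d ∧
    G.Adj a b ∧ G.Adj a c ∧ G.Adj a d ∧ G.Adj b c ∧ G.Adj b d ∧ ¬ G.Adj c d

/-- `G` has no induced complete bipartite graph `K_{3,2}`. -/
def NoK32 {V : Type*} (G : SimpleGraph V) : Prop :=
  ¬ ∃ x1 x2 x3 y1 y2 : V, x1 ≠ x2 ∧ x1 ≠ x3 ∧ x2 ≠ x3 ∧ y1 ≠ y2 ∧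
    G.Adj x1 y1 ∧ G.Adj x1 y2 ∧ G.Adj x2 y1 ∧ G.Adj x2 y2 ∧ G.Adj x3 y1 ∧ G.Adj x3 y2 ∧
    ¬ G.Adj x1 x2 ∧ ¬ G.Adj x1 x3 ∧ ¬ G.Adj x2 x3 ∧ ¬ G.Adj y1 y2

/-- A quasi-median graph: connected, with no induced `K₄⁻` nor `K_{3,2}`, satisfying
the triangle and quadrangle conditions. -/
def QuasiMedian {V : Type*} (G : SimpleGraph V) : Prop :=
  G.Connected ∧ NoK4minus G ∧ NoK32 G ∧ QMTriangle G ∧ QMQuad G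

/-- One step of the relation generating hyperplanes: two edges of a common
triangle, or two opposite edges of a square. -/
def hypStep {V : Type*} (G : SimpleGraph V) (e e' : Sym2 V) : Prop :=
  (∃ a b c : V, G.Adj a b ∧ G.Adj b c ∧ G.Adj a c ∧
      e ∈ ({s(a, b), s(b, c), s(a, c)} : Set (Sym2 V)) ∧
      e' ∈ ({s(a, b), s(b, c), s(a, c)} : Set (Sym2 V))) ∨
  (∃ a b c d : V, G.Adj a b ∧ G.Adj b c ∧ G.Adj c d ∧ G.Adj d a ∧ a ≠ c ∧ b ≠ d ∧
      e = s(a, b) ∧ e' = s(d, c))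

/-- The hyperplane (equivalence class of edges) of an edge `e`. -/
def hypClass {V : Type*} (G : SimpleGraph V) (e : Sym2 V) : Set (Sym2 V) :=
  {e' | Relation.ReflTransGen (hypStep G) e e'}

/-- `J` is a hyperplane of `G`. -/
def IsHyperplane {V : Type*} (G : SimpleGraph V) (J : Set (Sym2 V)) : Prop :=
  ∃ e ∈ G.edgeSet, J = hypClass G e

/-- The vertices of the carrier of a hyperplane: endpoints of its edges. -/
def hypVerts {V : Type*} (J : Set (Sym2 V)) : Set V := {v | ∃ e ∈ J, v ∈ e}

/-- Two distinct hyperplanes are transverse if the second contains an edge both of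
whose endpoints lie in the carrier of the first. -/
def Transverse {V : Type*} (G : SimpleGraph V) (J1 J2 : Set (Sym2 V)) : Prop :=
  J1 ≠ J2 ∧ ∃ u v : V, G.Adj u v ∧ s(u, v) ∈ J2 ∧ u ∈ hypVerts J1 ∧ v ∈ hypVerts J1


/-!
Every vertex `v` has a gate in a maximal clique `C`: a vertex of `C` closest to `v`, all other
vertices of `C` being one step further. The hyperplane of `C` consists exactly of the edges whose
endpoints have distinct gates. Indeed, an edge whose endpoints share their gate can only be
related, through a triangle or a square, to another such edge: the alternatives produce an
induced `K₄⁻` or `K_{3,2}`. Conversely, the quadrangle condition builds a ladder of squares from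
an edge with distinct gates down to `C`.

If two cliques `C1`, `C2` through `x0` lie in distinct hyperplanes, no vertex of `C1 \ {x0}` is
adjacent to a vertex of `C2 \ {x0}`. Transversality yields a vertex whose gates in `C1` and `C2`
both differ from `x0`, so the quadrangle condition gives a square `x0 x w y` with `x ∈ C1` and
`y ∈ C2`. The triangle condition moves such squares to every pair `(x, y)`, and they are unique.
The prism map sends `(x, y)` to the fourth vertex of its square. Its gates are `x` and `y`, which
makes it injective. An edge between two image vertices cannot change both coordinates, since it
would then lie in both hyperplanes.
-/

namespace SimpleGraph

variable {V : Type*} {G : SimpleGraph V}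

lemma Adj.dist_right_le {x y : V} (h : G.Adj x y) (a : V) : G.dist a y ≤ G.dist a x + 1 := by
  simpa [dist_eq_one_iff_adj.mpr h] using h.reachable.dist_triangle_right a

lemma Adj.dist_left_le {x y : V} (h : G.Adj x y) (a : V) : G.dist y a ≤ G.dist x a + 1 := by
  simpa [dist_comm] using h.dist_right_le a

lemma dist_eq_two_of_adj_of_adj {x u y : V} (hxu : G.Adj x u) (huy : G.Adj u y) (hxy : x ≠ y)
    (hnxy : ¬ G.Adj x y) : G.dist x y = 2 := by
  rw [dist, edist_eq_two_iff.mpr ⟨hxy, hnxy, u, hxu, huy.symm⟩]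
  rfl

lemma exists_adj_dist_eq_of_dist_eq_succ {u v : V} {n : ℕ} (h : G.dist u v = n + 1) :
    ∃ u', G.Adj u u' ∧ G.dist u' v = n := by
  obtain ⟨p, hp⟩ := exists_walk_of_dist_ne_zero (show G.dist u v ≠ 0 by omega)
  cases p with
  | nil => simp at h
  | cons hadj q =>
    rw [Walk.length_cons] at hp
    have := dist_le q
    have := hadj.symm.dist_left_le v
    exact ⟨_, hadj, by omega⟩

lemma NoK4minus.adj {a b c d : V} (hK4 : NoK4minus G) (hab : G.Adj a b) (hac : G.Adj a c)
    (had : G.Adj a d) (hbc : G.Adj b c) (hbd : G.Adj b d) (hcd : c ≠ d) : G.Adj c d := by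
  by_contra h
  exact hK4 ⟨a, b, c, d, hab.ne, hac.ne, had.ne, hbc.ne, hbd.ne, hcd,
    hab, hac, had, hbc, hbd, h⟩

lemma NoK4minus.adj_of_isClique {C : Set V} {x y z c : V} (hK4 : NoK4minus G)
    (hC : G.IsClique C) (hx : x ∈ C) (hy : y ∈ C) (hc : c ∈ C) (hxy : x ≠ y)
    (hzx : G.Adj z x) (hzy : G.Adj z y) (hzc : z ≠ c) : G.Adj z c := by
  by_cases hcx : c = x
  · exact hcx ▸ hzx
  by_cases hcy : c = y
  · exact hcy ▸ hzy
  exact hK4.adj (hC hx hy hxy) hzx.symm (hC hx hc (Ne.symm hcx)) hzy.symm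
    (hC hy hc (Ne.symm hcy)) hzc

lemma QMTriangle.exists_adj_adj (hT : QMTriangle G) {a x y : V} (hxy : G.Adj x y)
    (h : G.dist x a = G.dist y a) :
    ∃ z, G.Adj x z ∧ G.Adj y z ∧ G.dist z a + 1 = G.dist x a := by
  simp only [dist_comm (v := a)] at h ⊢
  exact hT a x y hxy h

lemma QMQuad.exists_adj_adj (hQ : QMQuad G) {a x y z : V} (hxz : G.Adj x z) (hyz : G.Adj y z)
    (hxy : x ≠ y) (h : G.dist x a = G.dist y a) (hz : G.dist z a = G.dist x a + 1) :
    ∃ w, G.Adj x w ∧ G.Adj y w ∧ G.dist w a + 2 = G.dist z a := by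
  simp only [dist_comm (v := a)] at h hz ⊢
  exact hQ a x y z hxz hyz hxy h hz

/-! ### Hyperplanes -/

lemma hypStep_symm {e e' : Sym2 V} (h : hypStep G e e') : hypStep G e' e := by
  rcases h with ⟨a, b, c, hab, hbc, hac, he, he'⟩ |
    ⟨a, b, c, d, hab, hbc, hcd, hda, hac, hbd, he, he'⟩
  · exact Or.inl ⟨a, b, c, hab, hbc, hac, he', he⟩
  · exact Or.inr ⟨d, c, b, a, hcd.symm, hbc.symm, hab.symm, hda.symm, hbd.symm, hac.symm,
      he', he⟩

instance : Std.Symm (hypStep G) := ⟨fun _ _ ↦ hypStep_symm⟩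

lemma mem_hypClass_self (e : Sym2 V) : e ∈ hypClass G e := Relation.ReflTransGen.refl

lemma mem_hypClass_comm {e e' : Sym2 V} : e' ∈ hypClass G e ↔ e ∈ hypClass G e' :=
  comm_of (Relation.ReflTransGen (hypStep G))

lemma hypClass_eq_of_mem {e e' : Sym2 V} (h : e' ∈ hypClass G e) :
    hypClass G e = hypClass G e' :=
  Set.Subset.antisymm (fun _ hf ↦ (mem_hypClass_comm.mp h).trans hf) (fun _ hf ↦ h.trans hf)

lemma IsHyperplane.eq_hypClass {J : Set (Sym2 V)} (hJ : IsHyperplane G J) {e : Sym2 V}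
    (he : e ∈ J) : J = hypClass G e := by
  obtain ⟨e₀, -, rfl⟩ := hJ
  exact hypClass_eq_of_mem he

lemma hypClass_subset_edgeSet {e : Sym2 V} (he : e ∈ G.edgeSet) : hypClass G e ⊆ G.edgeSet := by
  intro f hf
  induction hf with
  | refl => exact he
  | tail _ hstep _ =>
    rcases hstep with ⟨a, b, c, hab, hbc, hac, -, hf⟩ |
      ⟨-, -, c, d, -, -, hcd, -, -, -, -, rfl⟩
    · rcases hf with rfl | rfl | rfl <;> assumption
    · exact hcd.symm

lemma mem_hypClass_of_triangle {e : Sym2 V} {a b c : V} (hab : G.Adj a b) (hbc : G.Adj b c)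
    (hac : G.Adj a c) (h : s(a, b) ∈ hypClass G e) : s(a, c) ∈ hypClass G e :=
  h.tail (Or.inl ⟨a, b, c, hab, hbc, hac, by simp, by simp⟩)

lemma mem_hypClass_of_isClique {C : Set V} (hC : G.IsClique C) {p q a b : V} (hp : p ∈ C)
    (hq : q ∈ C) (ha : a ∈ C) (hb : b ∈ C) (hpq : p ≠ q) (hab : a ≠ b) :
    s(a, b) ∈ hypClass G s(p, q) := by
  have fan : ∀ {x y z}, x ∈ C → y ∈ C → z ∈ C → x ≠ y → x ≠ z →
      s(x, z) ∈ hypClass G s(x, y) := fun {x y z} hx hy hz hxy hxz ↦ by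
    by_cases hyz : y = z
    · exact hyz ▸ mem_hypClass_self _
    · exact mem_hypClass_of_triangle (hC hx hy hxy) (hC hy hz hyz) (hC hx hz hxz)
        (mem_hypClass_self _)
  by_cases hap : a = p
  · subst hap
    exact fan ha hq hb hpq hab
  · have hpa : s(a, p) ∈ hypClass G s(p, q) :=
      Sym2.eq_swap (a := p) ▸ fan hp hq ha hpq (Ne.symm hap)
    exact hpa.trans (fan ha hp hb hap hab)

/-! ### Gates -/

def IsGate (G : SimpleGraph V) (C : Set V) (a g : V) : Prop :=
  g ∈ C ∧ ∀ c ∈ C, c ≠ g → G.dist a c = G.dist a g + 1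

section Gates

variable {C : Set V}

lemma isGate_self (hC : G.IsClique C) {a : V} (ha : a ∈ C) : IsGate G C a a :=
  ⟨ha, fun c hc hca ↦ by rw [dist_eq_one_iff_adj.mpr (hC ha hc (Ne.symm hca)), dist_self]⟩

lemma IsGate.unique {a g g' : V} (h : IsGate G C a g) (h' : IsGate G C a g') : g = g' := by
  by_contra hne
  have := h.2 g' h'.1 (Ne.symm hne)
  have := h'.2 g h.1 hne
  omega

lemma isGate_of_adj (hC : G.IsClique C) {a g : V} (hg : g ∈ C) (hag : G.Adj a g)
    (hnadj : ∀ c ∈ C, c ≠ g → a ≠ c ∧ ¬ G.Adj a c) : IsGate G C a g := by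
  refine ⟨hg, fun c hc hcg ↦ ?_⟩
  rw [dist_eq_one_iff_adj.mpr hag, dist_eq_two_of_adj_of_adj hag (hC hg hc (Ne.symm hcg))
    (hnadj c hc hcg).1 (hnadj c hc hcg).2]

/-- A vertex `g` of `C` closest to `a` is a gate: a neighbour of `g` in `C` at the same distance
would, by the triangle condition, yield a vertex outside `C` adjacent to all of `C`. -/
lemma exists_isGate (hT : QMTriangle G) (hK4 : NoK4minus G) (hC : Maximal G.IsClique C)
    (hne : C.Nonempty) (a : V) : ∃ g, IsGate G C a g := by
  obtain ⟨g, hg, hmin⟩ := (InvImage.wf (G.dist a) wellFounded_lt).has_min C hne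
  replace hmin : ∀ c ∈ C, G.dist a g ≤ G.dist a c := fun c hc ↦ not_lt.mp (hmin c hc)
  refine ⟨g, hg, fun c hc hcg ↦ ?_⟩
  have hgc := hC.prop hg hc (Ne.symm hcg)
  refine le_antisymm (hgc.dist_right_le a) (Nat.succ_le_of_lt ?_)
  refine lt_of_le_of_ne (hmin c hc) fun heq ↦ ?_
  obtain ⟨z, hgz, hcz, hz⟩ := hT a g c hgc heq
  have hzC : z ∉ C := fun hz' ↦ by have := hmin z hz'; omega
  have hclique : G.IsClique (insert z C) := isClique_insert.mpr ⟨hC.prop, fun c' hc' hzc' ↦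
    hK4.adj_of_isClique hC.prop hg hc hc' (Ne.symm hcg) hgz.symm hcz.symm hzc'⟩
  exact hzC (hC.2 hclique (Set.subset_insert z C) (Set.mem_insert z C))

variable {γ : V → V}

lemma gate_eq_of_adj_of_dist_lt (hγ : ∀ v, IsGate G C v (γ v)) {a w : V} (haw : G.Adj a w)
    (hlt : G.dist w (γ a) < G.dist a (γ a)) : γ w = γ a := by
  by_contra hne
  have := (hγ w).2 (γ a) (hγ a).1 (Ne.symm hne)
  have := (hγ a).2 (γ w) (hγ w).1 hne
  have := haw.symm.dist_left_le (γ w)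
  omega

lemma dist_gate_eq_of_adj (hγ : ∀ v, IsGate G C v (γ v)) {a b : V} (hab : G.Adj a b)
    (hne : γ a ≠ γ b) : G.dist a (γ a) = G.dist b (γ b) := by
  have := (hγ a).2 (γ b) (hγ b).1 (Ne.symm hne)
  have := (hγ b).2 (γ a) (hγ a).1 hne
  have := hab.symm.dist_left_le (γ b)
  have := hab.dist_left_le (γ a)
  omega

lemma gate_eq_of_triangle (hQ : QMQuad G) (hK4 : NoK4minus G) (hγ : ∀ v, IsGate G C v (γ v))
    {p q r : V} (hpq : G.Adj p q) (hpr : G.Adj p r) (hqr : G.Adj q r) (h : γ p = γ q) :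
    γ r = γ p := by
  by_contra hne
  have hq := hγ q
  rw [← h] at hq
  have := (hγ r).2 (γ p) (hγ p).1 (Ne.symm hne)
  have := (hγ p).2 (γ r) (hγ r).1 hne
  have := hq.2 (γ r) (hγ r).1 hne
  have := hpr.dist_left_le (γ p)
  have := hqr.dist_left_le (γ p)
  have := hpr.symm.dist_left_le (γ r)
  have := hqr.symm.dist_left_le (γ r)
  obtain ⟨w, hpw, hqw, hw⟩ := hQ.exists_adj_adj hpr hqr hpq.ne (a := γ p) (by omega) (by omega)
  have hrw : r ≠ w := by rintro rfl; omega
  have := (hK4.adj hpq hpr hpw hqr hqw hrw).symm.dist_left_le (γ p)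
  omega

/-- If `b` had another gate, two applications of the quadrangle condition, towards both gates,
would produce an induced `K_{3,2}`. -/
lemma gate_eq_of_adj_of_adj (hQ : QMQuad G) (hK4 : NoK4minus G) (hK32 : NoK32 G)
    (hγ : ∀ v, IsGate G C v (γ v)) {a b c : V} (hba : G.Adj b a) (hbc : G.Adj b c)
    (hac : a ≠ c) (hnac : ¬ G.Adj a c) (h : γ a = γ c) : γ b = γ a := by
  by_contra hne
  have hab := dist_gate_eq_of_adj hγ hba hne
  have hcb := dist_gate_eq_of_adj hγ hbc (h ▸ hne)
  rw [← h] at hcb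
  have := (hγ b).2 (γ a) (hγ a).1 (Ne.symm hne)
  obtain ⟨v, hav, hcv, hv⟩ := hQ.exists_adj_adj hba.symm hbc.symm hac (a := γ a)
    (by omega) (by omega)
  have hγv : γ v = γ a := gate_eq_of_adj_of_dist_lt hγ hav (by omega)
  have hnvb : ¬ G.Adj v b := fun hvb ↦ by have := hvb.dist_left_le (γ a); omega
  have hvb : v ≠ b := by rintro rfl; omega
  have hvb' := (hγ v).2 (γ b) (hγ b).1 (hγv ▸ hne)
  rw [hγv] at hvb'
  have := (hγ a).2 (γ b) (hγ b).1 hne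
  obtain ⟨u, hbu, hvu, hu⟩ := hQ.exists_adj_adj hba hav.symm hvb.symm (a := γ b)
    (by omega) (by omega)
  have hγu : γ u = γ b := gate_eq_of_adj_of_dist_lt hγ hbu (by omega)
  have hnua : ¬ G.Adj u a := fun hua ↦
    hne (gate_eq_of_triangle hQ hK4 hγ hbu.symm hua hba hγu ▸ hγu).symm
  have hnuc : ¬ G.Adj u c := fun huc ↦
    hne (h ▸ (gate_eq_of_triangle hQ hK4 hγ hbu.symm huc hbc hγu ▸ hγu).symm)
  have hau : a ≠ u := by rintro rfl; exact hne hγu.symm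
  have hcu : c ≠ u := by rintro rfl; exact hne (h.trans hγu).symm
  exact hK32 ⟨a, c, u, v, b, hac, hau, hcu, hvb, hav, hba.symm, hcv, hbc.symm,
    hvu.symm, hbu.symm, hnac, fun h ↦ hnua h.symm, fun h ↦ hnuc h.symm, hnvb⟩

lemma gate_eq_of_adj_of_dist_gate_lt (hQ : QMQuad G) (hK4 : NoK4minus G)
    (hγ : ∀ v, IsGate G C v (γ v)) {a b t z : V} (hab : G.Adj a b) (hat : G.Adj a t)
    (hbt : G.Adj b t) (htz : G.Adj t z) (hne : γ a ≠ γ b)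
    (hz : G.dist z (γ z) < G.dist a (γ a)) : γ t = γ z := by
  have hγta : γ t ≠ γ a := fun h ↦
    hne (gate_eq_of_triangle hQ hK4 hγ hat.symm hbt.symm hab h |>.trans h).symm
  by_contra h
  have := dist_gate_eq_of_adj hγ htz h
  have := (hγ a).2 (γ t) (hγ t).1 hγta
  have := hat.symm.dist_left_le (γ t)
  omega

/-- If the gates of `a` and `b` differed, the triangle and quadrangle conditions would produce
vertices `z`, `w`, `t` such that `{d, w, t}` and `{z, a}` span an induced `K_{3,2}`. -/
lemma gate_eq_of_square_of_ne (hT : QMTriangle G) (hQ : QMQuad G) (hK4 : NoK4minus G)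
    (hK32 : NoK32 G) (hγ : ∀ v, IsGate G C v (γ v)) {a b c d : V} (hab : G.Adj a b)
    (hbc : G.Adj b c) (hcd : G.Adj c d) (hda : G.Adj d a) (hnbd : ¬ G.Adj b d)
    (hγcd : γ c = γ d) (hγac : γ a ≠ γ c) (hγbc : γ b ≠ γ c) : γ a = γ b := by
  by_contra hne
  have hγad : γ a ≠ γ d := hγcd ▸ hγac
  have := dist_gate_eq_of_adj hγ hab hne
  have := dist_gate_eq_of_adj hγ hbc hγbc
  have := dist_gate_eq_of_adj hγ hda hγad.symm
  have := (hγ c).2 (γ a) (hγ a).1 hγac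
  have := (hγ d).2 (γ a) (hγ a).1 hγad
  obtain ⟨z, hcz, hdz, hz⟩ := hT.exists_adj_adj hcd (a := γ a) (by omega)
  have hγz : γ z = γ c := gate_eq_of_triangle hQ hK4 hγ hcd hcz hdz hγcd
  have hnza : ¬ G.Adj z a := fun hza ↦
    hγad (gate_eq_of_triangle hQ hK4 hγ hdz.symm hza hda (hγz.trans hγcd) |>.trans
      (hγz.trans hγcd))
  have hnzb : ¬ G.Adj z b := fun hzb ↦
    hγbc (gate_eq_of_triangle hQ hK4 hγ hcz.symm hzb hbc.symm hγz |>.trans hγz)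
  have hza : z ≠ a := by rintro rfl; exact hγac hγz
  have hzb : z ≠ b := by rintro rfl; exact hγbc hγz
  have := (hγ z).2 (γ a) (hγ a).1 (hγz ▸ hγac)
  rw [hγz] at this
  obtain ⟨w, haw, hzw, hw⟩ := hQ.exists_adj_adj hda.symm hdz.symm hza.symm (a := γ a)
    (by omega) (by omega)
  have hγw : γ w = γ a := gate_eq_of_adj_of_dist_lt hγ haw (by omega)
  have haz : G.dist a z = 2 := dist_eq_two_of_adj_of_adj hda.symm hdz hza.symm (hnza ·.symm)
  have hbz : G.dist b z = 2 := dist_eq_two_of_adj_of_adj hbc hcz hzb.symm (hnzb ·.symm)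
  obtain ⟨t, hat, hbt, ht⟩ := hT.exists_adj_adj hab (haz.trans hbz.symm)
  have htz : G.Adj t z := dist_eq_one_iff_adj.mp (by omega)
  have hγt : γ t = γ c :=
    hγz ▸ gate_eq_of_adj_of_dist_gate_lt hQ hK4 hγ hab hat hbt htz hne (by rw [hγz]; omega)
  have hndt : ¬ G.Adj d t := fun hdt ↦
    hγad (gate_eq_of_triangle hQ hK4 hγ hdt hda hat.symm (hγcd.symm.trans hγt.symm))
  have hnwt : ¬ G.Adj w t := fun hwt ↦
    hγac (hγt ▸ (gate_eq_of_triangle hQ hK4 hγ haw.symm hwt hat hγw |>.trans hγw).symm)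
  have hndw : ¬ G.Adj d w := fun hdw ↦ by have := hdw.symm.dist_left_le (γ a); omega
  have hdw : d ≠ w := by rintro rfl; omega
  have hdt : d ≠ t := by rintro rfl; exact hnbd hbt
  have hwt : w ≠ t := by rintro rfl; exact hγac (hγw.symm.trans hγt)
  exact hK32 ⟨d, w, t, z, a, hdw, hdt, hwt, hza, hdz, hda, hzw.symm, haw.symm, htz, hat.symm,
    hndw, hndt, hnwt, hnza⟩

lemma gate_eq_of_square (hT : QMTriangle G) (hQ : QMQuad G) (hK4 : NoK4minus G)
    (hK32 : NoK32 G) (hγ : ∀ v, IsGate G C v (γ v)) {a b c d : V} (hab : G.Adj a b)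
    (hbc : G.Adj b c) (hcd : G.Adj c d) (hda : G.Adj d a) (hac : a ≠ c) (hbd : b ≠ d)
    (h : γ c = γ d) : γ a = γ b := by
  by_cases hac' : G.Adj a c
  · have hγa := gate_eq_of_triangle hQ hK4 hγ hcd hac'.symm hda h
    exact (gate_eq_of_triangle hQ hK4 hγ hac' hab hbc.symm hγa).symm
  by_cases hbd' : G.Adj b d
  · have hγb := gate_eq_of_triangle hQ hK4 hγ hcd hbc.symm hbd'.symm h
    exact gate_eq_of_triangle hQ hK4 hγ hbd' hab.symm hda (hγb.trans h)
  by_cases hγac : γ a = γ c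
  · exact (gate_eq_of_adj_of_adj hQ hK4 hK32 hγ hab.symm hbc hac hac' hγac).symm
  by_cases hγbc : γ b = γ c
  · exact gate_eq_of_adj_of_adj hQ hK4 hK32 hγ hab hda.symm hbd hbd' (hγbc.trans h)
  exact gate_eq_of_square_of_ne hT hQ hK4 hK32 hγ hab hbc hcd hda hbd' h hγac hγbc

lemma isDiag_map_of_hypStep (hT : QMTriangle G) (hQ : QMQuad G) (hK4 : NoK4minus G)
    (hK32 : NoK32 G) (hγ : ∀ v, IsGate G C v (γ v)) {e e' : Sym2 V} (hs : hypStep G e e')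
    (he : (e.map γ).IsDiag) : (e'.map γ).IsDiag := by
  rcases hs with ⟨a, b, c, hab, hbc, hac, hea, he'a⟩ |
    ⟨a, b, c, d, hab, hbc, hcd, hda, hac, hbd, rfl, rfl⟩
  · have hall : γ a = γ b ∧ γ b = γ c := by
      rcases hea with rfl | rfl | rfl <;> simp only [Sym2.map_mk, Sym2.mk_isDiag_iff] at he
      · exact ⟨he, he ▸ (gate_eq_of_triangle hQ hK4 hγ hab hac hbc he).symm⟩
      · exact ⟨gate_eq_of_triangle hQ hK4 hγ hbc hab.symm hac.symm he, he⟩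
      · have := gate_eq_of_triangle hQ hK4 hγ hac hab hbc.symm he
        exact ⟨this.symm, this ▸ he⟩
    rcases he'a with rfl | rfl | rfl <;> simp [hall.1, hall.2]
  · simp only [Sym2.map_mk, Sym2.mk_isDiag_iff] at he ⊢
    exact gate_eq_of_square hT hQ hK4 hK32 hγ hcd.symm hbc.symm hab.symm hda.symm hbd.symm
      hac.symm he.symm

/-- By induction on the distance to the gates: the quadrangle condition towards the gate of `a`
gives a square whose opposite edge is one step closer to `C`. -/
lemma mem_hypClass_of_gate_ne (hc : G.Connected) (hQ : QMQuad G) (hC : G.IsClique C)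
    (hγ : ∀ v, IsGate G C v (γ v)) {p q : V} (hp : p ∈ C) (hq : q ∈ C) (hpq : p ≠ q)
    {a b : V} (hab : G.Adj a b) (hne : γ a ≠ γ b) : s(a, b) ∈ hypClass G s(p, q) := by
  induction hn : G.dist a (γ a) generalizing a b with
  | zero =>
    have hb : G.dist b (γ b) = 0 := dist_gate_eq_of_adj hγ hab hne ▸ hn
    rw [hc.dist_eq_zero_iff] at hn hb
    exact mem_hypClass_of_isClique hC hp hq (hn ▸ (hγ a).1) (hb ▸ (hγ b).1) hpq hab.ne
  | succ m ih =>
    have hb := dist_gate_eq_of_adj hγ hab hne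
    obtain ⟨b', hbb', hb'⟩ :=
      exists_adj_dist_eq_of_dist_eq_succ (show G.dist b (γ b) = m + 1 by omega)
    have hγb' : γ b' = γ b := gate_eq_of_adj_of_dist_lt hγ hbb' (by omega)
    have hab' : a ≠ b' := by rintro rfl; exact hne hγb'
    have hb'a := (hγ b').2 (γ a) (hγ a).1 (hγb' ▸ hne)
    rw [hγb'] at hb'a
    have := (hγ b).2 (γ a) (hγ a).1 hne
    obtain ⟨w, haw, hb'w, hw⟩ := hQ.exists_adj_adj hab hbb'.symm hab' (a := γ a)
      (by omega) (by omega)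
    have hγw : γ w = γ a := gate_eq_of_adj_of_dist_lt hγ haw (by omega)
    have hwb : w ≠ b := by rintro rfl; omega
    have hwb' := ih hb'w.symm (by rw [hγw, hγb']; exact hne) (by rw [hγw]; omega)
    exact hwb'.tail (Or.inr ⟨w, b', b, a, hb'w.symm, hbb'.symm, hab.symm, haw, hwb,
      hab'.symm, rfl, rfl⟩)

lemma isDiag_map_of_mem_hypClass (hT : QMTriangle G) (hQ : QMQuad G) (hK4 : NoK4minus G)
    (hK32 : NoK32 G) (hγ : ∀ v, IsGate G C v (γ v)) {e f : Sym2 V} (hf : f ∈ hypClass G e)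
    (he : (e.map γ).IsDiag) : (f.map γ).IsDiag := by
  induction hf with
  | refl => exact he
  | tail _ hs ih => exact isDiag_map_of_hypStep hT hQ hK4 hK32 hγ hs ih

theorem mem_hypClass_iff_gate_ne (hc : G.Connected) (hT : QMTriangle G) (hQ : QMQuad G)
    (hK4 : NoK4minus G) (hK32 : NoK32 G) (hC : G.IsClique C) (hγ : ∀ v, IsGate G C v (γ v))
    {p q a b : V} (hp : p ∈ C) (hq : q ∈ C) (hpq : p ≠ q) (hab : G.Adj a b) :
    s(a, b) ∈ hypClass G s(p, q) ↔ γ a ≠ γ b := by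
  refine ⟨fun h hγab ↦ hpq ?_, mem_hypClass_of_gate_ne hc hQ hC hγ hp hq hpq hab⟩
  have := isDiag_map_of_mem_hypClass hT hQ hK4 hK32 hγ (mem_hypClass_comm.mp h)
    (by simpa using hγab)
  simp only [Sym2.map_mk, Sym2.mk_isDiag_iff] at this
  rwa [(hγ p).unique (isGate_self hC hp), (hγ q).unique (isGate_self hC hq)] at this

end Gates

/-! ### Prisms -/

structure IsCrossing (G : SimpleGraph V) (A B : Set V) (x0 : V) : Prop where
  isClique_left : G.IsClique A
  isClique_right : G.IsClique B
  mem_left : x0 ∈ A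
  mem_right : x0 ∈ B
  hypClass_ne : ∀ p ∈ A, ∀ q ∈ A, p ≠ q → ∀ p' ∈ B, ∀ q' ∈ B, p' ≠ q' →
    hypClass G s(p, q) ≠ hypClass G s(p', q')

/-- `w` is the vertex opposite to `x0` in a square `x0 x w y`. -/
def IsCorner (G : SimpleGraph V) (x0 x y w : V) : Prop :=
  G.Adj w x ∧ G.Adj w y ∧ ¬ G.Adj w x0 ∧ w ≠ x0

lemma IsCorner.symm {x0 x y w : V} (h : IsCorner G x0 x y w) : IsCorner G x0 y x w :=
  ⟨h.2.1, h.1, h.2.2⟩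

lemma IsCorner.unique (hK4 : NoK4minus G) (hK32 : NoK32 G) {x0 x y w w' : V}
    (hx : G.Adj x0 x) (hy : G.Adj x0 y) (hxy : x ≠ y) (hnxy : ¬ G.Adj x y)
    (hw : IsCorner G x0 x y w) (hw' : IsCorner G x0 x y w') : w = w' := by
  by_contra hne
  by_cases hadj : G.Adj w w'
  · exact hnxy (hK4.adj hadj hw.1 hw.2.1 hw'.1 hw'.2.1 hxy)
  · exact hK32 ⟨w, w', x0, x, y, hne, hw.2.2.2, hw'.2.2.2, hxy, hw.1, hw.2.1, hw'.1, hw'.2.1,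
      hx, hy, hadj, hw.2.2.1, hw'.2.2.1, hnxy⟩

/-- `w` is the vertex with coordinates `(x, y)` in the prism spanned by two cliques through `x0`. -/
def IsPrismVertex (G : SimpleGraph V) (x0 x y w : V) : Prop :=
  (x = x0 → w = y) ∧ (y = x0 → w = x) ∧ (x ≠ x0 → y ≠ x0 → IsCorner G x0 x y w)

lemma IsPrismVertex.symm {x0 x y w : V} (h : IsPrismVertex G x0 x y w) :
    IsPrismVertex G x0 y x w :=
  ⟨h.2.1, h.1, fun hy hx ↦ (h.2.2 hx hy).symm⟩

lemma exists_isPrismVertex {x0 x y : V} (h : x ≠ x0 → y ≠ x0 → ∃ w, IsCorner G x0 x y w) :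
    ∃ w, IsPrismVertex G x0 x y w := by
  by_cases hx : x = x0
  · exact ⟨y, fun _ ↦ rfl, fun hy ↦ hy.trans hx.symm, fun hx' ↦ absurd hx hx'⟩
  by_cases hy : y = x0
  · exact ⟨x, fun hx' ↦ absurd hx' hx, fun _ ↦ rfl, fun _ hy' ↦ absurd hy hy'⟩
  obtain ⟨w, hw⟩ := h hx hy
  exact ⟨w, fun hx' ↦ absurd hx' hx, fun hy' ↦ absurd hy' hy, fun _ _ ↦ hw⟩

namespace IsCrossing

variable {A B : Set V} {x0 : V} {γA γB : V → V}

lemma symm (h : IsCrossing G A B x0) : IsCrossing G B A x0 :=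
  ⟨h.isClique_right, h.isClique_left, h.mem_right, h.mem_left,
    fun p hp q hq hpq p' hp' q' hq' hpq' ↦
      (h.hypClass_ne p' hp' q' hq' hpq' p hp q hq hpq).symm⟩

section Basic

variable (h : IsCrossing G A B x0) {x y : V} (hx : x ∈ A) (hx0 : x ≠ x0) (hy : y ∈ B)
  (hy0 : y ≠ x0)
include h hx hx0 hy hy0

lemma ne : x ≠ y := by
  rintro rfl
  exact h.hypClass_ne x0 h.mem_left x hx hx0.symm x0 h.mem_right x hy hy0.symm rfl

lemma not_adj : ¬ G.Adj x y := fun hxy ↦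
  h.hypClass_ne x0 h.mem_left x hx hx0.symm x0 h.mem_right y hy hy0.symm <| hypClass_eq_of_mem <|
    mem_hypClass_of_triangle (h.isClique_left h.mem_left hx hx0.symm) hxy
      (h.isClique_right h.mem_right hy hy0.symm) (mem_hypClass_self _)

lemma not_adj_of_adj_of_adj {z : V} (hzx0 : G.Adj z x0) (hzx : G.Adj z x) : ¬ G.Adj z y :=
  fun hzy ↦ h.hypClass_ne x0 h.mem_left x hx hx0.symm x0 h.mem_right y hy hy0.symm <| by
    rw [hypClass_eq_of_mem (mem_hypClass_of_triangle (h.isClique_left h.mem_left hx hx0.symm)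
      hzx.symm hzx0.symm (mem_hypClass_self _)),
      hypClass_eq_of_mem (mem_hypClass_of_triangle (h.isClique_right h.mem_right hy hy0.symm)
      hzy.symm hzx0.symm (mem_hypClass_self _))]

end Basic

lemma exists_corner_adj (h : IsCrossing G A B x0) (hT : QMTriangle G) (hK4 : NoK4minus G)
    {x y y' w : V} (hx : x ∈ A) (hx0 : x ≠ x0) (hy : y ∈ B) (hy' : y' ∈ B)
    (hy'0 : y' ≠ x0) (hyy' : y ≠ y') (hw : IsCorner G x0 x y w) :
    ∃ z, IsCorner G x0 x y' z ∧ G.Adj w z := by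
  have hy0 : y ≠ x0 := by rintro rfl; exact hw.2.2.1 hw.2.1
  have hyy'adj := h.isClique_right hy hy' hyy'
  have hnwy' : ¬ G.Adj w y' := fun hwy' ↦ hw.2.2.1 <| .symm <| hK4.adj hyy'adj
    (h.isClique_right hy h.mem_right hy0) hw.2.1.symm (h.isClique_right hy' h.mem_right hy'0)
    hwy'.symm hw.2.2.2.symm
  have hwy' : w ≠ y' := by rintro rfl; exact h.not_adj hx hx0 hy' hy'0 hw.1.symm
  have hdw : G.dist w y' = 2 := dist_eq_two_of_adj_of_adj hw.2.1 hyy'adj hwy' hnwy'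
  have hdx : G.dist x y' = 2 := dist_eq_two_of_adj_of_adj
    (h.isClique_left hx h.mem_left hx0) (h.isClique_right h.mem_right hy' hy'0.symm)
    (h.ne hx hx0 hy' hy'0) (h.not_adj hx hx0 hy' hy'0)
  obtain ⟨z, hxz, hwz, hz⟩ := hT.exists_adj_adj hw.1.symm (a := y') (hdx.trans hdw.symm)
  have hzy' : G.Adj z y' := dist_eq_one_iff_adj.mp (by omega)
  refine ⟨z, ⟨hxz.symm, hzy', fun hzx0 ↦ ?_, ?_⟩, hwz⟩
  · exact h.not_adj_of_adj_of_adj hx hx0 hy' hy'0 hzx0 hxz.symm hzy'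
  · rintro rfl
    exact hw.2.2.1 hwz

lemma corner_adj (h : IsCrossing G A B x0) (hT : QMTriangle G) (hK4 : NoK4minus G)
    (hK32 : NoK32 G) {x y y' w w' : V} (hx : x ∈ A) (hx0 : x ≠ x0) (hy : y ∈ B)
    (hy' : y' ∈ B) (hy'0 : y' ≠ x0) (hyy' : y ≠ y') (hw : IsCorner G x0 x y w)
    (hw' : IsCorner G x0 x y' w') : G.Adj w w' := by
  obtain ⟨z, hz, hwz⟩ := h.exists_corner_adj hT hK4 hx hx0 hy hy' hy'0 hyy' hw
  rwa [IsCorner.unique hK4 hK32 (h.isClique_left h.mem_left hx hx0.symm)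
    (h.isClique_right h.mem_right hy' hy'0.symm) (h.ne hx hx0 hy' hy'0)
    (h.not_adj hx hx0 hy' hy'0) hz hw'] at hwz

lemma exists_corner_of_corner (h : IsCrossing G A B x0) (hT : QMTriangle G)
    (hK4 : NoK4minus G) {x y y' w : V} (hx : x ∈ A) (hx0 : x ≠ x0) (hy : y ∈ B)
    (hy' : y' ∈ B) (hy'0 : y' ≠ x0) (hw : IsCorner G x0 x y w) :
    ∃ w', IsCorner G x0 x y' w' := by
  rcases eq_or_ne y y' with rfl | hyy'
  · exact ⟨w, hw⟩
  · obtain ⟨z, hz, -⟩ := h.exists_corner_adj hT hK4 hx hx0 hy hy' hy'0 hyy' hw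
    exact ⟨z, hz⟩

lemma exists_corner (h : IsCrossing G A B x0) (hT : QMTriangle G) (hK4 : NoK4minus G)
    {x₁ y₁ w₁ x y : V} (hx₁ : x₁ ∈ A) (hx₁0 : x₁ ≠ x0) (hy₁ : y₁ ∈ B)
    (hw₁ : IsCorner G x0 x₁ y₁ w₁) (hx : x ∈ A) (hx0 : x ≠ x0) (hy : y ∈ B)
    (hy0 : y ≠ x0) : ∃ w, IsCorner G x0 x y w := by
  obtain ⟨w', hw'⟩ := h.exists_corner_of_corner hT hK4 hx₁ hx₁0 hy₁ hy hy0 hw₁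
  obtain ⟨w, hw⟩ := h.symm.exists_corner_of_corner hT hK4 hy hy0 hx₁ hx hx0 hw'.symm
  exact ⟨w, hw.symm⟩

lemma isPrismVertex_unique (h : IsCrossing G A B x0) (hK4 : NoK4minus G) (hK32 : NoK32 G)
    {x y w w' : V} (hx : x ∈ A) (hy : y ∈ B) (hw : IsPrismVertex G x0 x y w)
    (hw' : IsPrismVertex G x0 x y w') : w = w' := by
  by_cases hx0 : x = x0
  · rw [hw.1 hx0, hw'.1 hx0]
  by_cases hy0 : y = x0
  · rw [hw.2.1 hy0, hw'.2.1 hy0]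
  exact IsCorner.unique hK4 hK32 (h.isClique_left h.mem_left hx (Ne.symm hx0))
    (h.isClique_right h.mem_right hy (Ne.symm hy0)) (h.ne hx hx0 hy hy0)
    (h.not_adj hx hx0 hy hy0) (hw.2.2 hx0 hy0) (hw'.2.2 hx0 hy0)

lemma isGate_of_isPrismVertex (h : IsCrossing G A B x0) (hK4 : NoK4minus G) {x y w : V}
    (hx : x ∈ A) (hy : y ∈ B) (hw : IsPrismVertex G x0 x y w) : IsGate G A w x := by
  have hA := h.isClique_left
  by_cases hx0 : x = x0
  · subst hx0
    rw [hw.1 rfl]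
    by_cases hy0 : y = x
    · rw [hy0]
      exact isGate_self hA hx
    exact isGate_of_adj hA hx (h.isClique_right hy h.mem_right hy0) fun c hc hcx ↦
      ⟨(h.ne hc hcx hy hy0).symm, fun hyc ↦ h.not_adj hc hcx hy hy0 hyc.symm⟩
  by_cases hy0 : y = x0
  · rw [hw.2.1 hy0]
    exact isGate_self hA hx
  have hw' := hw.2.2 hx0 hy0
  refine isGate_of_adj hA hx hw'.1 fun c hc hcx ↦ ?_
  rcases eq_or_ne c x0 with rfl | hc0
  · exact ⟨hw'.2.2.2, hw'.2.2.1⟩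
  refine ⟨by rintro rfl; exact h.not_adj hc hc0 hy hy0 hw'.2.1, fun hwc ↦ hw'.2.2.1 ?_⟩
  exact hK4.adj (hA hx hc (Ne.symm hcx)) hw'.1.symm (hA hx h.mem_left hx0) hwc.symm
    (hA hc h.mem_left hc0) hw'.2.2.2

lemma adj_of_isPrismVertex (h : IsCrossing G A B x0) (hT : QMTriangle G) (hK4 : NoK4minus G)
    (hK32 : NoK32 G) {x y y' w w' : V} (hx : x ∈ A) (hy : y ∈ B) (hy' : y' ∈ B)
    (hyy' : y ≠ y') (hw : IsPrismVertex G x0 x y w) (hw' : IsPrismVertex G x0 x y' w') :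
    G.Adj w w' := by
  by_cases hx0 : x = x0
  · rw [hw.1 hx0, hw'.1 hx0]
    exact h.isClique_right hy hy' hyy'
  by_cases hy0 : y = x0
  · rw [hw.2.1 hy0]
    exact (hw'.2.2 hx0 (hy0 ▸ hyy'.symm)).1.symm
  by_cases hy'0 : y' = x0
  · rw [hw'.2.1 hy'0]
    exact (hw.2.2 hx0 hy0).1
  exact h.corner_adj hT hK4 hK32 hx hx0 hy hy' hy'0 hyy' (hw.2.2 hx0 hy0) (hw'.2.2 hx0 hy'0)

/-- An edge between prism vertices differing in both coordinates would lie in both hyperplanes,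
by `mem_hypClass_iff_gate_ne`. -/
lemma adj_iff_of_isPrismVertex (h : IsCrossing G A B x0) (hc : G.Connected) (hT : QMTriangle G)
    (hQ : QMQuad G) (hK4 : NoK4minus G) (hK32 : NoK32 G)
    (hγA : ∀ v, IsGate G A v (γA v)) (hγB : ∀ v, IsGate G B v (γB v)) {x y x' y' w w' : V}
    (hx : x ∈ A) (hy : y ∈ B) (hx' : x' ∈ A) (hy' : y' ∈ B) (hw : IsPrismVertex G x0 x y w)
    (hw' : IsPrismVertex G x0 x' y' w') :
    G.Adj w w' ↔ (x = x' ∧ y ≠ y') ∨ (y = y' ∧ x ≠ x') := by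
  constructor
  · intro hadj
    rcases eq_or_ne x x' with rfl | hxx'
    · refine .inl ⟨rfl, ?_⟩
      rintro rfl
      exact hadj.ne (h.isPrismVertex_unique hK4 hK32 hx hy hw hw')
    refine .inr ⟨by_contra fun hyy' ↦ ?_, hxx'⟩
    have hwA := (hγA w).unique (h.isGate_of_isPrismVertex hK4 hx hy hw)
    have hw'A := (hγA w').unique (h.isGate_of_isPrismVertex hK4 hx' hy' hw')
    have hwB := (hγB w).unique (h.symm.isGate_of_isPrismVertex hK4 hy hx hw.symm)
    have hw'B := (hγB w').unique (h.symm.isGate_of_isPrismVertex hK4 hy' hx' hw'.symm)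
    have hmemA := (mem_hypClass_iff_gate_ne hc hT hQ hK4 hK32 h.isClique_left hγA hx hx' hxx'
      hadj).mpr (by rwa [hwA, hw'A])
    have hmemB := (mem_hypClass_iff_gate_ne hc hT hQ hK4 hK32 h.isClique_right hγB hy hy' hyy'
      hadj).mpr (by rwa [hwB, hw'B])
    exact h.hypClass_ne x hx x' hx' hxx' y hy y' hy' hyy'
      ((hypClass_eq_of_mem hmemA).trans (hypClass_eq_of_mem hmemB).symm)
  · rintro (⟨rfl, hyy'⟩ | ⟨rfl, hxx'⟩)
    · exact h.adj_of_isPrismVertex hT hK4 hK32 hx hy hy' hyy' hw hw'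
    · exact h.symm.adj_of_isPrismVertex hT hK4 hK32 hy hx hx' hxx' hw.symm hw'.symm

/-- Transversality provides an edge of the second hyperplane with both endpoints on edges of
the first; the gates of one of these four vertices avoid `x0` in both cliques. -/
lemma exists_gates_ne_of_transverse (h : IsCrossing G A B x0) (hc : G.Connected)
    (hT : QMTriangle G) (hQ : QMQuad G) (hK4 : NoK4minus G) (hK32 : NoK32 G)
    (hγA : ∀ v, IsGate G A v (γA v)) (hγB : ∀ v, IsGate G B v (γB v)) {x y : V}
    (hx : x ∈ A) (hx0 : x ≠ x0) (hy : y ∈ B) (hy0 : y ≠ x0)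
    (htr : Transverse G (hypClass G s(x0, x)) (hypClass G s(x0, y))) :
    ∃ a, γA a ≠ x0 ∧ γB a ≠ x0 := by
  have hiffA := fun {a b : V} ↦ mem_hypClass_iff_gate_ne (a := a) (b := b) hc hT hQ hK4 hK32
    h.isClique_left hγA h.mem_left hx hx0.symm
  have hiffB := fun {a b : V} ↦ mem_hypClass_iff_gate_ne (a := a) (b := b) hc hT hQ hK4 hK32
    h.isClique_right hγB h.mem_right hy hy0.symm
  suffices key : ∀ t ∈ hypVerts (hypClass G s(x0, x)), γB t ≠ x0 →
      ∃ a, γA a ≠ x0 ∧ γB a ≠ x0 by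
    obtain ⟨-, u, v, huv, hJ, hu, hv⟩ := htr
    by_cases hu0 : γB u = x0
    · exact key v hv fun hv0 ↦ hiffB huv |>.mp hJ (hu0.trans hv0.symm)
    · exact key u hu hu0
  rintro t ⟨e, he, hte⟩ ht0
  have hs : s(t, Sym2.Mem.other hte) = e := Sym2.other_spec hte
  set t' := Sym2.Mem.other hte
  rw [← hs] at he
  have htt' : G.Adj t t' := hypClass_subset_edgeSet
    (h.isClique_left h.mem_left hx hx0.symm) he
  have hA := (hiffA htt').mp he
  by_cases hta : γA t = x0
  · refine ⟨t', fun ht'a ↦ hA (hta.trans ht'a.symm), fun ht'b ↦ ?_⟩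
    have hB := (hiffB htt').mpr fun htt ↦ ht0 (htt.trans ht'b)
    exact h.hypClass_ne x0 h.mem_left x hx hx0.symm x0 h.mem_right y hy hy0.symm
      ((hypClass_eq_of_mem he).trans (hypClass_eq_of_mem hB).symm)
  · exact ⟨t, hta, ht0⟩

lemma exists_corner_of_gates_ne (h : IsCrossing G A B x0) (hQ : QMQuad G)
    (hγA : ∀ v, IsGate G A v (γA v)) (hγB : ∀ v, IsGate G B v (γB v)) {a : V}
    (haA : γA a ≠ x0) (haB : γB a ≠ x0) : ∃ w, IsCorner G x0 (γA a) (γB a) w := by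
  have := (hγA a).2 x0 h.mem_left haA.symm
  have := (hγB a).2 x0 h.mem_right haB.symm
  obtain ⟨w, hAw, hBw, hw⟩ := hQ a (γA a) (γB a) x0
    (h.isClique_left (hγA a).1 h.mem_left haA) (h.isClique_right (hγB a).1 h.mem_right haB)
    (h.ne (hγA a).1 haA (hγB a).1 haB) (by omega) (by omega)
  refine ⟨w, hAw.symm, hBw.symm, fun hwx0 ↦ ?_, by rintro rfl; omega⟩
  exact h.not_adj_of_adj_of_adj (hγA a).1 haA (hγB a).1 haB hwx0 hAw.symm hBw.symm

theorem exists_prism (h : IsCrossing G A B x0) (hc : G.Connected) (hT : QMTriangle G)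
    (hQ : QMQuad G) (hK4 : NoK4minus G) (hK32 : NoK32 G)
    (hγA : ∀ v, IsGate G A v (γA v)) (hγB : ∀ v, IsGate G B v (γB v))
    (hcorner : ∀ x ∈ A, x ≠ x0 → ∀ y ∈ B, y ≠ x0 → ∃ w, IsCorner G x0 x y w) :
    ∃ f : A × B → V, Function.Injective f ∧
      (∀ x : A, f (x, ⟨x0, h.mem_right⟩) = x) ∧
      (∀ y : B, f (⟨x0, h.mem_left⟩, y) = y) ∧
      ∀ p q : A × B, G.Adj (f p) (f q) ↔
        ((p.1 = q.1 ∧ p.2 ≠ q.2) ∨ (p.2 = q.2 ∧ p.1 ≠ q.1)) := by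
  choose f hf using fun p : A × B ↦
    exists_isPrismVertex (G := G) (x0 := x0) (hcorner p.1 p.1.2 · p.2 p.2.2)
  refine ⟨f, fun p q hpq ↦ ?_, fun x ↦ (hf _).2.1 rfl, fun y ↦ (hf _).1 rfl,
    fun p q ↦ ?_⟩
  · have hA := h.isGate_of_isPrismVertex hK4 p.1.2 p.2.2 (hf p)
    have hB := h.symm.isGate_of_isPrismVertex hK4 p.2.2 p.1.2 (hf p).symm
    rw [hpq] at hA hB
    exact Prod.ext (Subtype.ext <| hA.unique (h.isGate_of_isPrismVertex hK4 q.1.2 q.2.2 (hf q)))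
      (Subtype.ext <| hB.unique (h.symm.isGate_of_isPrismVertex hK4 q.2.2 q.1.2 (hf q).symm))
  · rw [h.adj_iff_of_isPrismVertex hc hT hQ hK4 hK32 hγA hγB p.1.2 p.2.2 q.1.2 q.2.2
      (hf p) (hf q)]
    simp only [ne_eq, Subtype.ext_iff]

end IsCrossing

end SimpleGraph

/-- In a quasi-median graph, two intersecting cliques whose hyperplanes are distinct and
transverse span a prism: there is an embedding of `C1 × C2` extending the identity on
`C1` and `C2` whose image is an induced copy of the Cartesian product of the two
cliques. -/
theorem stmt8 {V : Type*} (G : SimpleGraph V) (hG : QuasiMedian G)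
    (C1 C2 : Set V)
    (hC1 : G.IsClique C1 ∧ ∀ D, G.IsClique D → C1 ⊆ D → D = C1)
    (hC2 : G.IsClique C2 ∧ ∀ D, G.IsClique D → C2 ⊆ D → D = C2)
    (x0 : V) (hx1 : x0 ∈ C1) (hx2 : x0 ∈ C2)
    (J1 J2 : Set (Sym2 V)) (hJ1 : IsHyperplane G J1) (hJ2 : IsHyperplane G J2)
    (hC1J1 : ∀ u ∈ C1, ∀ v ∈ C1, u ≠ v → s(u, v) ∈ J1)
    (hC2J2 : ∀ u ∈ C2, ∀ v ∈ C2, u ≠ v → s(u, v) ∈ J2)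
    (htr : Transverse G J1 J2) :
    ∃ f : C1 × C2 → V, Function.Injective f ∧
      (∀ x : C1, f (x, ⟨x0, hx2⟩) = x) ∧
      (∀ y : C2, f (⟨x0, hx1⟩, y) = y) ∧
      ∀ p q : C1 × C2, G.Adj (f p) (f q) ↔
        ((p.1 = q.1 ∧ p.2 ≠ q.2) ∨ (p.2 = q.2 ∧ p.1 ≠ q.1)) := by
  obtain ⟨hc, hK4, hK32, hT, hQ⟩ := hG
  have hJ1C1 {p q} (hp : p ∈ C1) (hq : q ∈ C1) (hpq : p ≠ q) : J1 = hypClass G s(p, q) :=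
    hJ1.eq_hypClass (hC1J1 p hp q hq hpq)
  have hJ2C2 {p q} (hp : p ∈ C2) (hq : q ∈ C2) (hpq : p ≠ q) : J2 = hypClass G s(p, q) :=
    hJ2.eq_hypClass (hC2J2 p hp q hq hpq)
  have h : IsCrossing G C1 C2 x0 := ⟨hC1.1, hC2.1, hx1, hx2,
    fun p hp q hq hpq p' hp' q' hq' hpq' ↦ hJ1C1 hp hq hpq ▸ hJ2C2 hp' hq' hpq' ▸ htr.1⟩
  have hmax {C : Set V} (hC : G.IsClique C ∧ ∀ D, G.IsClique D → C ⊆ D → D = C) :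
      Maximal G.IsClique C := ⟨hC.1, fun D hD hCD ↦ (hC.2 D hD hCD).le⟩
  choose γ₁ hγ₁ using exists_isGate hT hK4 (hmax hC1) ⟨x0, hx1⟩
  choose γ₂ hγ₂ using exists_isGate hT hK4 (hmax hC2) ⟨x0, hx2⟩
  refine h.exists_prism hc hT hQ hK4 hK32 hγ₁ hγ₂ fun x hx hx0 y hy hy0 ↦ ?_
  rw [hJ1C1 hx1 hx hx0.symm, hJ2C2 hx2 hy hy0.symm] at htr
  obtain ⟨a, ha1, ha2⟩ :=
    h.exists_gates_ne_of_transverse hc hT hQ hK4 hK32 hγ₁ hγ₂ hx hx0 hy hy0 htr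
  obtain ⟨w, hw⟩ := h.exists_corner_of_gates_ne hQ hγ₁ hγ₂ ha1 ha2
  exact h.exists_corner hT hK4 (hγ₁ a).1 ha1 (hγ₂ a).1 hw hx hx0 hy hy0
end
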